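/- arXiv:2110.03891 — 7 statements merged into one kernel-verified Lean document; each statement's English description precedes it below -/
import Mathlib

section
/- Under the stated GDM conditions, let w̃ ∈ ℝ^d be any fixed vector and define r(t) = w(t) − (ln t)·ŵ − w̃ for t ≥ 1, and g(t) = (1/2)·‖r(t)‖² + (β/(1−β))·⟪r(t), w(t) − w(t−1)⟫ − (β/(1−β))·∑_{τ=2}^{t} ⟪r(τ) − r(τ−1), w(τ) − w(τ−1)⟫. Then sup_{t≥1} ‖r(t)‖ < ∞ if and only if sup_{t≥1} g(t) < ∞. -/
open Filter Topology RealInnerProductSpace MeasureTheory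

set_option linter.unusedVariables false
set_option maxHeartbeats 4000000


lemma lem_quad (x b K : ℝ) (hx : 0 ≤ x) (hb : 0 ≤ b) (h : x^2 ≤ b*x + K) :
    x ≤ b + Real.sqrt (max K 0) := by
  by_contra h'
  push_neg at h'
  have hs : 0 ≤ Real.sqrt (max K 0) := Real.sqrt_nonneg _
  have h2 : Real.sqrt (max K 0)^2 = max K 0 := Real.sq_sqrt (le_max_right _ _)
  nlinarith [le_max_left K 0]

lemma lem_sumsq (t : ℕ) : (∑ τ ∈ Finset.Icc 2 t, (1/((τ:ℝ)-1))^2) ≤ 2 := by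
  have key : ∀ t : ℕ, 2 ≤ t → (∑ τ ∈ Finset.Icc 2 t, (1/((τ:ℝ)-1))^2) ≤ 2 - 1/((t:ℝ)-1) := by
    intro t ht
    induction t, ht using Nat.le_induction with
    | base => norm_num
    | succ n hn ih =>
      rw [Finset.sum_Icc_succ_top (by omega : 2 ≤ n + 1)]
      have hs : (2:ℝ) ≤ (n:ℝ) := by exact_mod_cast hn
      have h1 : (1/((n:ℝ)+1-1))^2 ≤ 1/((n:ℝ)-1) - 1/((n:ℝ)+1-1) := by
        rw [div_sub_div _ _ (by linarith) (by linarith)]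
        rw [div_pow, one_pow, div_le_div_iff₀ (by nlinarith) (by nlinarith)]
        ring_nf
        nlinarith
      push_cast
      push_cast at ih
      linarith
  by_cases ht : 2 ≤ t
  · have hs : (2:ℝ) ≤ (t:ℝ) := by exact_mod_cast ht
    have h0 : 0 ≤ 1/((t:ℝ)-1) := div_nonneg zero_le_one (by linarith)
    linarith [key t ht]
  · rw [Finset.Icc_eq_empty (by omega)]
    norm_num

lemma lem_taylor (ℓ ℓ' : ℝ → ℝ) (hdiff : ∀ s : ℝ, HasDerivAt ℓ (ℓ' s) s)
    (s₀ H₀ : ℝ) (hH₀pos : 0 < H₀)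
    (hH₀ : ∀ a b : ℝ, s₀ ≤ a → s₀ ≤ b → |ℓ' a - ℓ' b| ≤ H₀ * |a - b|)
    (a b : ℝ) (ha : s₀ ≤ a) (hb : s₀ ≤ b) :
    ℓ b ≤ ℓ a + ℓ' a * (b - a) + H₀/2 * (b-a)^2 := by
  set F : ℝ → ℝ := fun u => ℓ (a + u*(b-a)) - ℓ' a * (b-a) * u - H₀/2*(b-a)^2*u^2 with hF
  have hFd : ∀ u : ℝ, HasDerivAt F (ℓ' (a + u*(b-a)) * (b-a) - ℓ' a * (b-a) - H₀*(b-a)^2*u) u := by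
    intro u
    have h1 : HasDerivAt (fun u : ℝ => a + u*(b-a)) (b-a) u := by
      simpa using (hasDerivAt_id u).mul_const (b-a) |>.const_add a
    have h2 : HasDerivAt (fun u : ℝ => ℓ (a + u*(b-a))) (ℓ' (a + u*(b-a)) * (b-a)) u :=
      (hdiff _).comp u h1
    have h3 : HasDerivAt (fun u : ℝ => ℓ' a * (b-a) * u) (ℓ' a * (b-a)) u := by
      simpa using (hasDerivAt_id u).const_mul (ℓ' a * (b-a))
    have h4 : HasDerivAt (fun u : ℝ => H₀/2*(b-a)^2*u^2) (H₀/2*(b-a)^2*(2*u)) u := by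
      simpa using ((hasDerivAt_pow 2 u).const_mul (H₀/2*(b-a)^2))
    have := (h2.sub h3).sub h4
    refine this.congr_deriv ?_
    ring
  have hanti : AntitoneOn F (Set.Icc 0 1) := by
    apply antitoneOn_of_deriv_nonpos (convex_Icc 0 1)
    · exact fun u _ => (hFd u).differentiableAt.continuousAt.continuousWithinAt
    · intro u hu
      exact (hFd u).differentiableAt.differentiableWithinAt
    · intro u hu
      rw [interior_Icc] at hu
      rw [(hFd u).deriv]
      have hx : s₀ ≤ a + u*(b-a) := by nlinarith [hu.1, hu.2]
      have hb1 := hH₀ (a + u*(b-a)) a hx ha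
      have habs : |a + u*(b-a) - a| = u * |b-a| := by
        rw [show a + u*(b-a) - a = u*(b-a) by ring, abs_mul, abs_of_nonneg hu.1.le]
      rw [habs] at hb1
      have h5 : (ℓ' (a + u*(b-a)) - ℓ' a) * (b-a) ≤ H₀ * (u * |b-a|) * |b-a| := by
        calc (ℓ' (a + u*(b-a)) - ℓ' a) * (b-a) ≤ |(ℓ' (a + u*(b-a)) - ℓ' a) * (b-a)| := le_abs_self _
        _ = |ℓ' (a + u*(b-a)) - ℓ' a| * |b-a| := abs_mul _ _
        _ ≤ H₀ * (u * |b-a|) * |b-a| := by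
            apply mul_le_mul_of_nonneg_right hb1 (abs_nonneg _)
      have hsq : |b-a| * |b-a| = (b-a)^2 := by rw [← abs_mul, abs_mul_self]; ring
      have h6 : H₀ * (u * |b-a|) * |b-a| = H₀*(b-a)^2*u := by rw [← hsq]; ring
      rw [h6] at h5
      linarith
  have h01 : F 1 ≤ F 0 := hanti (by norm_num) (by norm_num) (by norm_num)
  simp only [hF] at h01
  norm_num at h01
  linarith

lemma lem_slope (f : ℝ → ℝ) (dd : ℝ) (hf : HasDerivAt f dd 0) (hd : dd < 0) :
    ∃ ε > 0, ∀ u ∈ Set.Ioo (0:ℝ) ε, f u < f 0 := by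
  have h := hasDerivAt_iff_tendsto_slope.1 hf
  have h3 : ∀ᶠ u in 𝓝[≠] (0:ℝ), slope f 0 u < 0 := h.eventually_lt_const hd
  have hle : 𝓝[>] (0:ℝ) ≤ 𝓝[≠] (0:ℝ) := nhdsWithin_mono _ (fun u hu => ne_of_gt hu)
  have h2 : {u : ℝ | slope f 0 u < 0} ∈ 𝓝[>] (0:ℝ) := hle h3
  rw [mem_nhdsGT_iff_exists_Ioo_subset] at h2
  obtain ⟨ε, hε, hsub⟩ := h2
  refine ⟨ε, hε, fun u hu => ?_⟩
  have := hsub hu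
  simp only [Set.mem_setOf_eq, slope_def_field] at this
  have hu0 : 0 < u := hu.1
  rw [div_neg_iff] at this
  rcases this with ⟨h1, h2⟩ | ⟨h1, h2⟩
  · linarith
  · linarith

lemma lem_X {d N : ℕ} (x : Fin N → EuclideanSpace ℝ (Fin d)) (σmax : ℝ) (hσpos : 0 < σmax)
    (hσ : ∀ c : Fin N → ℝ, ‖∑ i, c i • x i‖ ≤ σmax * Real.sqrt (∑ i, (c i) ^ 2))
    (v : EuclideanSpace ℝ (Fin d)) :
    ∑ i, ⟪v, x i⟫^2 ≤ σmax^2 * ‖v‖^2 := by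
  set c : Fin N → ℝ := fun i => ⟪v, x i⟫ with hc
  set s : ℝ := ∑ i, (c i)^2 with hs
  have hs0 : 0 ≤ s := Finset.sum_nonneg (fun i _ => sq_nonneg _)
  have h1 : s = ⟪v, ∑ i, c i • x i⟫ := by
    rw [inner_sum]
    apply Finset.sum_congr rfl
    intro i _
    rw [real_inner_smul_right]
    ring
  have h2 : s ≤ ‖v‖ * (σmax * Real.sqrt s) := by
    calc s = ⟪v, ∑ i, c i • x i⟫ := h1
    _ ≤ ‖v‖ * ‖∑ i, c i • x i‖ := real_inner_le_norm _ _
    _ ≤ ‖v‖ * (σmax * Real.sqrt s) := by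
        apply mul_le_mul_of_nonneg_left (hσ c) (norm_nonneg _)
  have h3 : Real.sqrt s ^ 2 = s := Real.sq_sqrt hs0
  nlinarith [Real.sqrt_nonneg s, sq_nonneg (σmax * ‖v‖ - Real.sqrt s), norm_nonneg v]

lemma lem_descent {d N : ℕ} (hN : 1 ≤ N) (x : Fin N → EuclideanSpace ℝ (Fin d))
    (ℓ ℓ' : ℝ → ℝ) (hdiff : ∀ s : ℝ, HasDerivAt ℓ (ℓ' s) s)
    (L : EuclideanSpace ℝ (Fin d) → ℝ)
    (hLdef : ∀ w : EuclideanSpace ℝ (Fin d), L w = (1 / (N : ℝ)) * ∑ i, ℓ ⟪w, x i⟫)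
    (gradL : EuclideanSpace ℝ (Fin d) → EuclideanSpace ℝ (Fin d))
    (hgraddef : ∀ w : EuclideanSpace ℝ (Fin d),
      gradL w = (1 / (N : ℝ)) • ∑ i, ℓ' ⟪w, x i⟫ • x i)
    (σmax : ℝ) (hσpos : 0 < σmax)
    (hσ : ∀ c : Fin N → ℝ, ‖∑ i, c i • x i‖ ≤ σmax * Real.sqrt (∑ i, (c i) ^ 2))
    (s₀ H₀ : ℝ) (hH₀pos : 0 < H₀)
    (hH₀ : ∀ a b : ℝ, s₀ ≤ a → s₀ ≤ b → |ℓ' a - ℓ' b| ≤ H₀ * |a - b|)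
    (v v' : EuclideanSpace ℝ (Fin d))
    (hv : ∀ i, s₀ ≤ ⟪v, x i⟫) (hv' : ∀ i, s₀ ≤ ⟪v', x i⟫) :
    L v' ≤ L v + ⟪gradL v, v' - v⟫ + (σmax^2*H₀/(N:ℝ)/2) * ‖v' - v‖^2 := by
  have hNpos : (0:ℝ) < N := by exact_mod_cast hN
  have hdiffip : ∀ i, ⟪v', x i⟫ - ⟪v, x i⟫ = ⟪v' - v, x i⟫ := by
    intro i; rw [inner_sub_left]
  have htay : ∀ i : Fin N, ℓ ⟪v', x i⟫ ≤ ℓ ⟪v, x i⟫ + ℓ' ⟪v, x i⟫ * ⟪v' - v, x i⟫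
      + H₀/2 * ⟪v' - v, x i⟫^2 := by
    intro i
    have := lem_taylor ℓ ℓ' hdiff s₀ H₀ hH₀pos hH₀ ⟪v, x i⟫ ⟪v', x i⟫ (hv i) (hv' i)
    rw [hdiffip i] at this
    exact this
  have hsum : ∑ i, ℓ ⟪v', x i⟫ ≤ ∑ i, ℓ ⟪v, x i⟫ + ∑ i, ℓ' ⟪v, x i⟫ * ⟪v' - v, x i⟫
      + H₀/2 * ∑ i, ⟪v' - v, x i⟫^2 := by
    rw [Finset.mul_sum, ← Finset.sum_add_distrib, ← Finset.sum_add_distrib]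
    exact Finset.sum_le_sum (fun i _ => htay i)
  have hip : ⟪gradL v, v' - v⟫ = (1/(N:ℝ)) * ∑ i, ℓ' ⟪v, x i⟫ * ⟪v' - v, x i⟫ := by
    rw [hgraddef, real_inner_smul_left, sum_inner]
    congr 1
    apply Finset.sum_congr rfl
    intro i _
    rw [real_inner_smul_left, real_inner_comm (x i) (v' - v)]
  have hXb := lem_X x σmax hσpos hσ (v' - v)
  rw [hLdef v', hLdef v, hip]
  have h2 : (1/(N:ℝ)) * (H₀/2 * ∑ i, ⟪v' - v, x i⟫^2) ≤ σmax^2*H₀/(N:ℝ)/2 * ‖v' - v‖^2 := by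
    rw [show σmax^2*H₀/(N:ℝ)/2 * ‖v' - v‖^2 = (1/(N:ℝ)) * (H₀/2 * (σmax^2 * ‖v' - v‖^2)) by ring]
    apply mul_le_mul_of_nonneg_left _ (by positivity)
    apply mul_le_mul_of_nonneg_left hXb (by positivity)
  calc (1/(N:ℝ)) * ∑ i, ℓ ⟪v', x i⟫
      ≤ (1/(N:ℝ)) * (∑ i, ℓ ⟪v, x i⟫ + ∑ i, ℓ' ⟪v, x i⟫ * ⟪v' - v, x i⟫
        + H₀/2 * ∑ i, ⟪v' - v, x i⟫^2) := by
        apply mul_le_mul_of_nonneg_left hsum (by positivity)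
  _ ≤ (1/(N:ℝ)) * ∑ i, ℓ ⟪v, x i⟫ + (1/(N:ℝ)) * ∑ i, ℓ' ⟪v, x i⟫ * ⟪v' - v, x i⟫
        + σmax^2*H₀/(N:ℝ)/2 * ‖v' - v‖^2 := by
        rw [mul_add, mul_add]
        linarith [h2]
lemma lem_step {d N : ℕ} (hN : 1 ≤ N) (x : Fin N → EuclideanSpace ℝ (Fin d))
    (ℓ ℓ' : ℝ → ℝ) (hdiff : ∀ s : ℝ, HasDerivAt ℓ (ℓ' s) s)
    (L : EuclideanSpace ℝ (Fin d) → ℝ)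
    (hLdef : ∀ w : EuclideanSpace ℝ (Fin d), L w = (1 / (N : ℝ)) * ∑ i, ℓ ⟪w, x i⟫)
    (gradL : EuclideanSpace ℝ (Fin d) → EuclideanSpace ℝ (Fin d))
    (hgraddef : ∀ w : EuclideanSpace ℝ (Fin d),
      gradL w = (1 / (N : ℝ)) • ∑ i, ℓ' ⟪w, x i⟫ • x i)
    (σmax : ℝ) (hσpos : 0 < σmax)
    (hσ : ∀ c : Fin N → ℝ, ‖∑ i, c i • x i‖ ≤ σmax * Real.sqrt (∑ i, (c i) ^ 2))
    (s₀ H₀ : ℝ) (hH₀pos : 0 < H₀)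
    (hH₀ : ∀ a b : ℝ, s₀ ≤ a → s₀ ≤ b → |ℓ' a - ℓ' b| ≤ H₀ * |a - b|)
    (η β : ℝ) (hη : 0 < η) (hβ0 : 0 ≤ β) (hβ1 : β < 1)
    (Hc κ a : ℝ) (hHcdef : Hc = σmax^2*H₀/(N:ℝ)) (hκdef : κ = 1/η - Hc/2)
    (hadef : a = β/(2*η*(1-β))) (hκpos : 0 < κ)
    (Lmax : ℝ)
    (hmargin : ∀ v : EuclideanSpace ℝ (Fin d), L v ≤ Lmax → ∀ i, s₀ ≤ ⟪v, x i⟫)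
    (P W W' : EuclideanSpace ℝ (Fin d))
    (hrel : W' - W = β • (W - P) - (η*(1-β)) • gradL W)
    (hEt : L W + a * ‖W - P‖^2 ≤ Lmax) :
    L W' + (a + κ) * ‖W' - W‖^2 ≤ L W + a * ‖W - P‖^2 := by
  have hNpos : (0:ℝ) < N := by exact_mod_cast hN
  have hβ1' : (0:ℝ) < 1 - β := by linarith
  have hHcpos : 0 < Hc := by rw [hHcdef]; positivity
  have ha0 : 0 ≤ a := by rw [hadef]; positivity
  have hLt_le : L W ≤ Lmax := by linarith [mul_nonneg ha0 (sq_nonneg ‖W - P‖), hEt]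
  have hwtm : ∀ i, s₀ ≤ ⟪W, x i⟫ := hmargin W hLt_le
  obtain ⟨D1, hD1def⟩ : ∃ v, v = W - P := ⟨_, rfl⟩
  obtain ⟨D2, hD2def⟩ : ∃ v, v = W' - W := ⟨_, rfl⟩
  rw [← hD1def] at hEt ⊢
  rw [← hD2def]
  have hrel' : D2 = β • D1 - (η*(1-β)) • gradL W := by rw [hD2def, hD1def]; exact hrel
  by_cases hD2z : D2 = 0
  · have hww : W' = W := by
      have h0 : W' - W = 0 := by rw [← hD2def]; exact hD2z
      exact sub_eq_zero.mp h0
    rw [hww, hD2z]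
    simp only [norm_zero]
    ring_nf
    linarith [mul_nonneg ha0 (sq_nonneg ‖D1‖)]
  · have hnD2 : 0 < ‖D2‖^2 := pow_pos (norm_pos_iff.mpr hD2z) 2
    obtain ⟨ip, hipdef⟩ : ∃ v : ℝ, v = ⟪gradL W, D2⟫ := ⟨_, rfl⟩
    have hip_eq : (η*(1-β)) * ip = β * ⟪D1, D2⟫ - ‖D2‖^2 := by
      have h5 : ⟪D2, D2⟫ = β * ⟪D1, D2⟫ - (η*(1-β)) * ⟪gradL W, D2⟫ := by
        nth_rewrite 1 [hrel']
        rw [inner_sub_left, real_inner_smul_left, real_inner_smul_left]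
      rw [real_inner_self_eq_norm_sq] at h5
      rw [hipdef]
      linarith
    have hAM : ⟪D1, D2⟫ ≤ (‖D1‖^2 + ‖D2‖^2)/2 := by
      have h1 := real_inner_le_norm D1 D2
      nlinarith [sq_nonneg (‖D1‖ - ‖D2‖)]
    have key : η*(1-β) * ip ≤ β*(‖D1‖^2 + ‖D2‖^2)/2 - ‖D2‖^2 := by
      rw [hip_eq]
      linarith [mul_le_mul_of_nonneg_left hAM hβ0]
    obtain ⟨φ, hφdef⟩ : ∃ φ : ℝ → ℝ,
        φ = fun u => L W + u * ip + Hc/2 * (u^2 * ‖D2‖^2) := ⟨_, rfl⟩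
    have hφval : ∀ u : ℝ, φ u = L W + u * ip + Hc/2 * (u^2 * ‖D2‖^2) := by
      intro u; rw [hφdef]
    have hφ1 : φ 1 + (a + κ) * ‖D2‖^2 ≤ L W + a * ‖D1‖^2 := by
      rw [hφval, one_mul, one_pow]
      have hgoal : ip + (a + 1/η)*‖D2‖^2 ≤ a*‖D1‖^2 := by
        have hmul : (0:ℝ) < η*(1-β) := by positivity
        have e1 : (η*(1-β)) * (a*‖D1‖^2) = (β/2)*‖D1‖^2 := by
          rw [hadef]; field_simp
        have e2 : (η*(1-β)) * ((a + 1/η)*‖D2‖^2) = (β/2 + (1-β))*‖D2‖^2 := by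
          rw [hadef]; field_simp
        have H1 : (η*(1-β)) * (ip + (a + 1/η)*‖D2‖^2) ≤ (η*(1-β)) * (a*‖D1‖^2) := by
          rw [mul_add, e2, e1]
          linarith [key]
        exact le_of_mul_le_mul_left H1 hmul
      rw [hκdef]
      nlinarith [hgoal]
    have hdesc : ∀ u:ℝ, 0 ≤ u → u ≤ 1 → (∀ i, s₀ ≤ ⟪W + u•D2, x i⟫) →
        L (W + u•D2) ≤ φ u := by
      intro u hu0 hu1 hmarg
      have hd := lem_descent hN x ℓ ℓ' hdiff L hLdef gradL hgraddef σmax hσpos hσ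
        s₀ H₀ hH₀pos hH₀ W (W + u•D2) hwtm hmarg
      rw [add_sub_cancel_left] at hd
      have e3 : ⟪gradL W, u•D2⟫ = u * ip := by
        rw [hipdef]
        try exact real_inner_smul_right _ _ _
      have e4 : ‖u•D2‖^2 = u^2*‖D2‖^2 := by
        rw [norm_smul, mul_pow, Real.norm_eq_abs, sq_abs]
      rw [e3, e4] at hd
      rw [hφval]
      calc L (W + u•D2) ≤ L W + u * ip + σmax^2*H₀/(N:ℝ)/2 * (u^2*‖D2‖^2) := hd
      _ = L W + u * ip + Hc/2 * (u^2 * ‖D2‖^2) := by rw [hHcdef]; try ring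
    obtain ⟨f, hfdef⟩ : ∃ f : ℝ → ℝ,
        f = fun u => (1/(N:ℝ)) * ∑ i, ℓ (⟪W, x i⟫ + u * ⟪D2, x i⟫) := ⟨_, rfl⟩
    have hfval : ∀ u : ℝ, f u = (1/(N:ℝ)) * ∑ i, ℓ (⟪W, x i⟫ + u * ⟪D2, x i⟫) := by
      intro u; rw [hfdef]
    have hfeq : ∀ u : ℝ, f u = L (W + u • D2) := by
      intro u
      rw [hfval, hLdef]
      congr 1
      apply Finset.sum_congr rfl
      intro i _
      congr 1
      rw [inner_add_left, real_inner_smul_left]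
    have hfd : ∀ u : ℝ, HasDerivAt f
        ((1/(N:ℝ)) * ∑ i, ℓ' (⟪W, x i⟫ + u * ⟪D2, x i⟫) * ⟪D2, x i⟫) u := by
      intro u
      rw [hfdef]
      apply HasDerivAt.const_mul
      apply HasDerivAt.fun_sum
      intro i _
      have h1 : HasDerivAt (fun u : ℝ => ⟪W, x i⟫ + u * ⟪D2, x i⟫) ⟪D2, x i⟫ u := by
        simpa using ((hasDerivAt_id u).mul_const ⟪D2, x i⟫).const_add ⟪W, x i⟫
      exact (hdiff _).comp u h1
    have hdifff : Differentiable ℝ f := fun u => (hfd u).differentiableAt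
    have hfcont : Continuous f := hdifff.continuous
    have hf0 : f 0 = L W := by
      rw [hfeq]
      norm_num
    obtain ⟨V, hVdef⟩ : ∃ V : Set ℝ,
        V = {u : ℝ | 0 ≤ u ∧ u ≤ 1 ∧ ∀ v, 0 ≤ v → v ≤ u → f v ≤ Lmax} := ⟨_, rfl⟩
    have h0V : (0:ℝ) ∈ V := by
      rw [hVdef]
      refine ⟨le_rfl, zero_le_one, fun v h0 h1 => ?_⟩
      have : v = 0 := le_antisymm h1 h0
      rw [this, hf0]; exact hLt_le
    have hVbdd : BddAbove V := ⟨1, fun u hu => by rw [hVdef] at hu; exact hu.2.1⟩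
    have hVne : V.Nonempty := ⟨0, h0V⟩
    obtain ⟨T, hTdef⟩ : ∃ T : ℝ, T = sSup V := ⟨_, rfl⟩
    have hT0 : 0 ≤ T := hTdef ▸ le_csSup hVbdd h0V
    have hT1 : T ≤ 1 := hTdef ▸ csSup_le hVne (fun u hu => by rw [hVdef] at hu; exact hu.2.1)
    have hTf : ∀ v, 0 ≤ v → v < T → f v ≤ Lmax := by
      intro v h0 hv
      rw [hTdef] at hv
      obtain ⟨u, huV, hvu⟩ := exists_lt_of_lt_csSup hVne hv
      rw [hVdef] at huV
      exact huV.2.2 v h0 hvu.le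
    have hfT : f T ≤ Lmax := by
      rcases eq_or_lt_of_le hT0 with h | h
      · rw [← h, hf0]; exact hLt_le
      · have htend : Tendsto f (𝓝[<] T) (𝓝 (f T)) :=
          (hfcont.continuousAt).continuousWithinAt
        apply le_of_tendsto htend
        filter_upwards [Ioo_mem_nhdsLT_of_mem (Set.mem_Ioc.2 ⟨h, le_rfl⟩)] with v hv
        exact hTf v hv.1.le hv.2
    have hfleV : ∀ v, 0 ≤ v → v ≤ T → f v ≤ Lmax := by
      intro v h0 hvT
      rcases lt_or_eq_of_le hvT with h | h
      · exact hTf v h0 h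
      · rw [h]; exact hfT
    have hmargT : ∀ v, 0 ≤ v → v ≤ T → ∀ i, s₀ ≤ ⟪W + v•D2, x i⟫ := by
      intro v h0 hvT i
      apply hmargin _ _ i
      rw [← hfeq]
      exact hfleV v h0 hvT
    have hfTφ : f T ≤ φ T := by
      rw [hfeq]
      exact hdesc T hT0 hT1 (hmargT T hT0 le_rfl)
    have hφ1' : φ 1 ≤ Lmax - κ*‖D2‖^2 := by
      nlinarith [hφ1, hEt, mul_nonneg ha0 (sq_nonneg ‖D2‖)]
    have hφ0 : φ 0 = L W := by rw [hφval]; ring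
    have hφbound : ∀ u:ℝ, 0 ≤ u → u ≤ 1 → φ u ≤ Lmax - u * (κ*‖D2‖^2) := by
      intro u h0 h1
      have hconv : φ u ≤ (1-u)*(φ 0) + u*(φ 1) := by
        rw [hφval, hφval, hφval]
        nlinarith [mul_nonneg (mul_nonneg hHcpos.le (sq_nonneg ‖D2‖))
          (mul_nonneg h0 (sub_nonneg.2 h1)), sq_nonneg ‖D2‖]
      calc φ u ≤ (1-u)*(φ 0) + u*(φ 1) := hconv
      _ ≤ (1-u)*Lmax + u*(Lmax - κ*‖D2‖^2) := by
          apply add_le_add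
          · apply mul_le_mul_of_nonneg_left _ (by linarith)
            rw [hφ0]; exact hLt_le
          · exact mul_le_mul_of_nonneg_left hφ1' h0
      _ = Lmax - u*(κ*‖D2‖^2) := by ring
    have hκD2 : 0 < κ*‖D2‖^2 := mul_pos hκpos hnD2
    have hT_eq : T = 1 := by
      by_contra hne
      have hTlt : T < 1 := lt_of_le_of_ne hT1 hne
      have hgrow : ∃ ρ:ℝ, T < ρ ∧ ρ ≤ 1 ∧ (∀ v, T < v → v ≤ ρ → f v ≤ Lmax) := by
        by_cases hflt : f T < Lmax
        · have hopen : IsOpen {u : ℝ | f u < Lmax} := isOpen_lt hfcont continuous_const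
          obtain ⟨ε, hε, hball⟩ := Metric.isOpen_iff.1 hopen T hflt
          refine ⟨min (T + ε/2) 1, lt_min (by linarith) hTlt, min_le_right _ _, ?_⟩
          intro v hv1 hv2
          have hvb : v ∈ Metric.ball T ε := by
            rw [Metric.mem_ball, Real.dist_eq, abs_of_pos (by linarith)]
            have := le_min_iff.1 hv2
            linarith [this.1]
          exact (hball hvb).le
        · have hfTeq : f T = Lmax := le_antisymm hfT (not_lt.1 hflt)
          have hTz : T = 0 := by
            by_contra hTnz
            have hTpos : 0 < T := lt_of_le_of_ne hT0 (Ne.symm hTnz)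
            have h12 := hφbound T hT0 hT1
            linarith [hfTφ, mul_pos hTpos hκD2, h12, hfTeq.ge, hfTeq.le]
          have hLteq : L W = Lmax := by rw [← hf0, ← hTz, hfTeq]
          have hbD1 : β • D1 = 0 := by
            have haD1 : a * ‖D1‖^2 ≤ 0 := by linarith [hEt, hLteq.ge, hLteq.le]
            rcases hβ0.eq_or_lt with hb | hb
            · rw [← hb, zero_smul]
            · have hapos : 0 < a := by rw [hadef]; positivity
              have h11 : ‖D1‖^2 ≤ 0 := by
                by_contra hcon
                push_neg at hcon
                have := mul_pos hapos hcon
                linarith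
              have hD1z : D1 = 0 := by
                have h13 : ‖D1‖^2 = 0 := le_antisymm h11 (sq_nonneg _)
                have h14 : ‖D1‖ = 0 := by
                  exact pow_eq_zero_iff (two_ne_zero) |>.1 h13
                exact norm_eq_zero.1 h14
              rw [hD1z, smul_zero]
          have hipneg : ip < 0 := by
            have h6 : β * ⟪D1, D2⟫ = 0 := by
              have h6' : β * ⟪D1, D2⟫ = ⟪β • D1, D2⟫ := (real_inner_smul_left _ _ _).symm
              rw [h6', hbD1, inner_zero_left]
            have h7 : (η*(1-β)) * ip = -‖D2‖^2 := by rw [hip_eq, h6]; ring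
            by_contra hcon
            push_neg at hcon
            have := mul_nonneg (mul_pos hη hβ1').le hcon
            linarith
          have hfd0 : HasDerivAt f ip 0 := by
            have h8 := hfd 0
            have h9 : (1/(N:ℝ)) * ∑ i, ℓ' (⟪W, x i⟫ + 0 * ⟪D2, x i⟫) * ⟪D2, x i⟫ = ip := by
              rw [hipdef, hgraddef, real_inner_smul_left, sum_inner]
              congr 1
              apply Finset.sum_congr rfl
              intro i _
              rw [real_inner_smul_left, real_inner_comm (x i) D2]
              norm_num
            rwa [h9] at h8
          obtain ⟨ε, hε, hsl⟩ := lem_slope f ip hfd0 hipneg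
          refine ⟨min (ε/2) 1, by rw [hTz]; positivity, min_le_right _ _, ?_⟩
          intro v hv1 hv2
          rw [hTz] at hv1
          have hvε : v < ε := by
            have := le_min_iff.1 hv2
            linarith [this.1]
          have := hsl v ⟨hv1, hvε⟩
          rw [hf0] at this
          rw [← hLteq]
          exact this.le
      obtain ⟨ρ, hρ1, hρ2, hρ3⟩ := hgrow
      have hρV : ρ ∈ V := by
        rw [hVdef]
        refine ⟨by linarith, hρ2, fun v h0 hvρ => ?_⟩
        rcases le_or_gt v T with h | h
        · exact hfleV v h0 h
        · exact hρ3 v h hvρ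
      have := le_csSup hVbdd hρV
      rw [← hTdef] at this
      linarith
    have hm1 : ∀ i, s₀ ≤ ⟪W + (1:ℝ)•D2, x i⟫ := hmargT 1 zero_le_one (hT_eq ▸ le_rfl)
    have hwt1 : W + (1:ℝ)•D2 = W' := by
      rw [one_smul, hD2def, add_sub_cancel]
    have hfinal : L W' ≤ φ 1 := by
      rw [← hwt1]
      exact hdesc 1 zero_le_one le_rfl hm1
    linarith [hφ1]
theorem stmt7
    {d N : ℕ} (hN : 1 ≤ N)
    (x : Fin N → EuclideanSpace ℝ (Fin d))
    (ℓ ℓ' : ℝ → ℝ)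
    (hdiff : ∀ s : ℝ, HasDerivAt ℓ (ℓ' s) s)
    (L : EuclideanSpace ℝ (Fin d) → ℝ)
    (hLdef : ∀ w : EuclideanSpace ℝ (Fin d), L w = (1 / (N : ℝ)) * ∑ i, ℓ ⟪w, x i⟫)
    (gradL : EuclideanSpace ℝ (Fin d) → EuclideanSpace ℝ (Fin d))
    (hgraddef : ∀ w : EuclideanSpace ℝ (Fin d),
      gradL w = (1 / (N : ℝ)) • ∑ i, ℓ' ⟪w, x i⟫ • x i)
    (hsep : ∃ u : EuclideanSpace ℝ (Fin d), ∀ i, 0 < ⟪u, x i⟫)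
    (σmax : ℝ) (hσpos : 0 < σmax)
    (hσ : ∀ c : Fin N → ℝ, ‖∑ i, c i • x i‖ ≤ σmax * Real.sqrt (∑ i, (c i) ^ 2))
    (wmax : EuclideanSpace ℝ (Fin d))
    (hwmax : ∀ i, 1 ≤ ⟪wmax, x i⟫)
    (hwmaxmin : ∀ v : EuclideanSpace ℝ (Fin d), (∀ i, 1 ≤ ⟪v, x i⟫) → ‖wmax‖ ≤ ‖v‖)
    (hℓpos : ∀ s : ℝ, 0 < ℓ s) (hℓ'neg : ∀ s : ℝ, ℓ' s < 0)
    (hℓtop : Tendsto ℓ atTop (𝓝 0))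
    (hℓ'top : Tendsto ℓ' atTop (𝓝 0))
    (hℓ'bot : Filter.limsup ℓ' atBot < 0)
    (μp μm xp xm : ℝ) (hμp : 0 < μp) (hμm : 0 < μm)
    (htailp : ∀ s : ℝ, xp < s → -ℓ' s ≤ (1 + Real.exp (-μp * s)) * Real.exp (-s))
    (htailm : ∀ s : ℝ, xm < s → (1 - Real.exp (-μm * s)) * Real.exp (-s) ≤ -ℓ' s)
    (hloc : ∀ s : ℝ, ∃ H : ℝ, 0 < H ∧
      ∀ a b : ℝ, s ≤ a → s ≤ b → |ℓ' a - ℓ' b| ≤ H * |a - b|)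
    (η β : ℝ) (hη : 0 < η) (hβ0 : 0 ≤ β) (hβ1 : β < 1)
    (w m : ℕ → EuclideanSpace ℝ (Fin d))
    (hm0 : m 0 = 0) (hw0 : w 0 = w 1)
    (hmrec : ∀ t : ℕ, 1 ≤ t → m t = β • m (t - 1) + (1 - β) • gradL (w t))
    (hwrec : ∀ t : ℕ, 1 ≤ t → w (t + 1) = w t - η • m t)
    (s₀ H₀ : ℝ) (hs₀ : ℓ s₀ = N * L (w 1)) (hH₀pos : 0 < H₀)
    (hH₀ : ∀ a b : ℝ, s₀ ≤ a → s₀ ≤ b → |ℓ' a - ℓ' b| ≤ H₀ * |a - b|)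
    (hηlt : η < 2 * N / (σmax ^ 2 * H₀))
    (wtil : EuclideanSpace ℝ (Fin d))
    (r : ℕ → EuclideanSpace ℝ (Fin d)) (g : ℕ → ℝ)
    (hrdef : ∀ t : ℕ, r t = w t - Real.log t • wmax - wtil)
    (hgdef : ∀ t : ℕ, g t =
      (1 / 2) * ‖r t‖ ^ 2 + (β / (1 - β)) * ⟪r t, w t - w (t - 1)⟫ -
        (β / (1 - β)) * ∑ τ ∈ Finset.Icc 2 t, ⟪r τ - r (τ - 1), w τ - w (τ - 1)⟫) :
    (∃ C : ℝ, ∀ t : ℕ, 1 ≤ t → ‖r t‖ ≤ C) ↔ (∃ C : ℝ, ∀ t : ℕ, 1 ≤ t → g t ≤ C) := by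
  have hNpos : (0:ℝ) < N := by exact_mod_cast hN
  have hβ1' : (0:ℝ) < 1 - β := by linarith
  have hc0 : (0:ℝ) ≤ β / (1 - β) := div_nonneg hβ0 hβ1'.le
  obtain ⟨Hc, hHcdef⟩ : ∃ Hc : ℝ, Hc = σmax^2*H₀/(N:ℝ) := ⟨_, rfl⟩
  have hHcpos : 0 < Hc := by rw [hHcdef]; positivity
  obtain ⟨κ, hκdef⟩ : ∃ κ : ℝ, κ = 1/η - Hc/2 := ⟨_, rfl⟩
  have hκpos : 0 < κ := by
    have h2 : 0 < σmax^2*H₀ := by positivity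
    have h3 : η * (σmax^2*H₀) < 2*N := (lt_div_iff₀ h2).1 hηlt
    rw [hκdef, hHcdef, sub_pos, div_div, div_lt_div_iff₀ (by positivity) hη]
    nlinarith
  obtain ⟨a, hadef⟩ : ∃ a : ℝ, a = β/(2*η*(1-β)) := ⟨_, rfl⟩
  have ha0 : 0 ≤ a := by rw [hadef]; positivity
  have hdiffℓ : Differentiable ℝ ℓ := fun s => (hdiff s).differentiableAt
  have hℓcont : Continuous ℓ := hdiffℓ.continuous
  have hanti : StrictAnti ℓ := by
    apply strictAnti_of_deriv_neg
    intro s; rw [(hdiff s).deriv]; exact hℓ'neg s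
  have hNe : Nonempty (Fin N) := ⟨⟨0, by omega⟩⟩
  have hLpos : ∀ v : EuclideanSpace ℝ (Fin d), 0 < L v := by
    intro v; rw [hLdef]
    apply mul_pos (by positivity)
    exact Finset.sum_pos (fun i _ => hℓpos _) Finset.univ_nonempty
  have hmargin : ∀ v : EuclideanSpace ℝ (Fin d), L v ≤ L (w 1) → ∀ i, s₀ ≤ ⟪v, x i⟫ := by
    intro v hLv i
    by_contra hlt
    push_neg at hlt
    have h1 : ℓ ⟪v, x i⟫ ≤ ∑ j, ℓ ⟪v, x j⟫ :=
      Finset.single_le_sum (f := fun j => ℓ ⟪v, x j⟫) (fun j _ => (hℓpos _).le) (Finset.mem_univ i)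
    have h2 : ∑ j, ℓ ⟪v, x j⟫ = (N:ℝ) * L v := by rw [hLdef]; field_simp
    have h3 : ℓ s₀ < ℓ ⟪v, x i⟫ := hanti hlt
    have h4 : (N:ℝ) * L v ≤ (N:ℝ) * L (w 1) := mul_le_mul_of_nonneg_left hLv hNpos.le
    rw [hs₀] at h3
    linarith [h2 ▸ h1]
  -- momentum relation
  have hDrel : ∀ t : ℕ, 1 ≤ t →
      w (t+1) - w t = β • (w t - w (t-1)) - (η*(1-β)) • gradL (w t) := by
    intro t ht
    have h1 : w (t+1) = w t - η • m t := hwrec t ht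
    have h2 : m t = β • m (t-1) + (1-β) • gradL (w t) := hmrec t ht
    have h3 : w t - w (t-1) = -η • m (t-1) := by
      rcases eq_or_lt_of_le ht with h | h
      · rw [← h]; simp only [Nat.sub_self, hm0, hw0]
        simp
      · have ht2 : 1 ≤ t - 1 := by omega
        have h4 := hwrec (t-1) ht2
        rw [show t - 1 + 1 = t by omega] at h4
        rw [h4]; module
    rw [h1, h2, h3]; module
  -- the one-step Lyapunov descent
  have hstep : ∀ t : ℕ, 1 ≤ t →
      L (w t) + a * ‖w t - w (t-1)‖^2 ≤ L (w 1) →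
      L (w (t+1)) + (a + κ) * ‖w (t+1) - w t‖^2 ≤ L (w t) + a * ‖w t - w (t-1)‖^2 := by
    intro t ht hEt
    exact lem_step hN x ℓ ℓ' hdiff L hLdef gradL hgraddef σmax hσpos hσ s₀ H₀ hH₀pos hH₀
      η β hη hβ0 hβ1 Hc κ a hHcdef hκdef hadef hκpos (L (w 1)) hmargin
      (w (t-1)) (w t) (w (t+1)) (hDrel t ht) hEt
  -- global Lyapunov bound
  have hmain : ∀ t : ℕ, 1 ≤ t →
      L (w t) + a * ‖w t - w (t-1)‖^2
        + κ * ∑ τ ∈ Finset.Icc 2 t, ‖w τ - w (τ-1)‖^2 ≤ L (w 1) := by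
    intro t ht
    induction t, ht using Nat.le_induction with
    | base =>
      rw [Finset.Icc_eq_empty (by omega)]
      simp [hw0.symm, show (1:ℕ)-1 = 0 from rfl]
    | succ n hn ih =>
      have hsumnn : (0:ℝ) ≤ ∑ τ ∈ Finset.Icc 2 n, ‖w τ - w (τ-1)‖^2 :=
        Finset.sum_nonneg (fun τ _ => sq_nonneg _)
      have hE : L (w n) + a*‖w n - w (n-1)‖^2 ≤ L (w 1) := by
        linarith [mul_nonneg hκpos.le hsumnn, ih]
      have hs := hstep n hn hE
      rw [Finset.sum_Icc_succ_top (by omega : 2 ≤ n+1)]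
      rw [Nat.add_sub_cancel]
      rw [mul_add, add_mul] at *
      linarith
  -- consequences
  obtain ⟨Dv, hDvdef⟩ : ∃ Dv : ℝ, Dv = L (w 1) / κ := ⟨_, rfl⟩
  have hDv0 : 0 ≤ Dv := by rw [hDvdef]; exact div_nonneg (hLpos (w 1)).le hκpos.le
  have hsum_le : ∀ t : ℕ, 1 ≤ t → ∑ τ ∈ Finset.Icc 2 t, ‖w τ - w (τ-1)‖^2 ≤ Dv := by
    intro t ht
    have h1 := hmain t ht
    rw [hDvdef, le_div_iff₀ hκpos]
    linarith [(hLpos (w t)).le, mul_nonneg ha0 (sq_nonneg ‖w t - w (t-1)‖), h1]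
  have hDelta : ∀ t : ℕ, 1 ≤ t → ‖w t - w (t-1)‖ ≤ Real.sqrt Dv := by
    intro t ht
    rcases eq_or_lt_of_le ht with h | h
    · rw [← h]
      simp [hw0.symm, show (1:ℕ)-1 = 0 from rfl]
    · have hmem : t ∈ Finset.Icc 2 t := Finset.mem_Icc.2 ⟨h, le_rfl⟩
      have hsingle : ‖w t - w (t-1)‖^2 ≤ ∑ τ ∈ Finset.Icc 2 t, ‖w τ - w (τ-1)‖^2 :=
        Finset.single_le_sum (f := fun τ => ‖w τ - w (τ-1)‖^2) (fun τ _ => sq_nonneg _) hmem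
      have h2 := le_trans hsingle (hsum_le t ht)
      calc ‖w t - w (t-1)‖ = Real.sqrt (‖w t - w (t-1)‖^2) :=
            (Real.sqrt_sq (norm_nonneg _)).symm
      _ ≤ Real.sqrt Dv := Real.sqrt_le_sqrt h2
  -- bound on the inner-product sum
  have hSb : ∀ t : ℕ, 1 ≤ t →
      |∑ τ ∈ Finset.Icc 2 t, ⟪r τ - r (τ-1), w τ - w (τ-1)⟫| ≤ 3/2*Dv + ‖wmax‖^2 := by
    intro t ht
    have hterm : ∀ τ ∈ Finset.Icc 2 t, |⟪r τ - r (τ-1), w τ - w (τ-1)⟫|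
        ≤ 3/2*‖w τ - w (τ-1)‖^2 + 1/2*‖wmax‖^2*(1/((τ:ℝ)-1))^2 := by
      intro τ hτ
      have hτ2 : 2 ≤ τ := (Finset.mem_Icc.1 hτ).1
      have hτr : (2:ℝ) ≤ (τ:ℝ) := by exact_mod_cast hτ2
      have hcast : ((τ-1:ℕ):ℝ) = (τ:ℝ)-1 := by
        push_cast [Nat.cast_sub (by omega : 1 ≤ τ)]
        ring
      have hp1 : (1:ℝ) ≤ (τ:ℝ)-1 := by linarith
      have hrdiff : r τ - r (τ-1) = (w τ - w (τ-1))
          - (Real.log τ - Real.log ((τ-1:ℕ):ℝ)) • wmax := by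
        rw [hrdef τ, hrdef (τ-1)]
        module
      have hinner : ⟪r τ - r (τ-1), w τ - w (τ-1)⟫ = ‖w τ - w (τ-1)‖^2
          - (Real.log τ - Real.log ((τ-1:ℕ):ℝ)) * ⟪wmax, w τ - w (τ-1)⟫ := by
        rw [hrdiff, inner_sub_left, real_inner_smul_left, real_inner_self_eq_norm_sq]
      have hlam0 : 0 ≤ Real.log τ - Real.log ((τ-1:ℕ):ℝ) := by
        rw [hcast]
        have := Real.log_le_log (by linarith : (0:ℝ) < (τ:ℝ)-1) (by linarith : (τ:ℝ)-1 ≤ τ)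
        linarith
      have hlamup : Real.log τ - Real.log ((τ-1:ℕ):ℝ) ≤ 1/((τ:ℝ)-1) := by
        rw [hcast]
        have hpos : (0:ℝ) < (τ:ℝ)/((τ:ℝ)-1) := by positivity
        have h := Real.log_le_sub_one_of_pos hpos
        rw [Real.log_div (by positivity) (by linarith)] at h
        have he : (τ:ℝ)/((τ:ℝ)-1) - 1 = 1/((τ:ℝ)-1) := by field_simp; ring
        linarith
      have hCS : |⟪wmax, w τ - w (τ-1)⟫| ≤ ‖wmax‖ * ‖w τ - w (τ-1)‖ :=
        abs_real_inner_le_norm _ _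
      rw [hinner]
      have habs : |‖w τ - w (τ-1)‖^2 - (Real.log τ - Real.log ((τ-1:ℕ):ℝ)) * ⟪wmax, w τ - w (τ-1)⟫|
          ≤ ‖w τ - w (τ-1)‖^2 + (Real.log τ - Real.log ((τ-1:ℕ):ℝ)) * |⟪wmax, w τ - w (τ-1)⟫| := by
        calc _ ≤ |‖w τ - w (τ-1)‖^2| + |(Real.log τ - Real.log ((τ-1:ℕ):ℝ)) * ⟪wmax, w τ - w (τ-1)⟫| :=
              abs_sub _ _
        _ = ‖w τ - w (τ-1)‖^2 + (Real.log τ - Real.log ((τ-1:ℕ):ℝ)) * |⟪wmax, w τ - w (τ-1)⟫| := by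
              rw [abs_of_nonneg (sq_nonneg _), abs_mul, abs_of_nonneg hlam0]
      have h9 : (Real.log τ - Real.log ((τ-1:ℕ):ℝ)) * |⟪wmax, w τ - w (τ-1)⟫|
          ≤ (1/((τ:ℝ)-1)) * (‖wmax‖ * ‖w τ - w (τ-1)‖) := by
        apply mul_le_mul hlamup (le_trans hCS le_rfl) (abs_nonneg _) (by positivity)
      have h10 : (1/((τ:ℝ)-1)) * (‖wmax‖ * ‖w τ - w (τ-1)‖)
          ≤ 1/2*‖wmax‖^2*(1/((τ:ℝ)-1))^2 + 1/2*‖w τ - w (τ-1)‖^2 := by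
        nlinarith [sq_nonneg ((1/((τ:ℝ)-1))*‖wmax‖ - ‖w τ - w (τ-1)‖)]
      linarith
    calc |∑ τ ∈ Finset.Icc 2 t, ⟪r τ - r (τ-1), w τ - w (τ-1)⟫|
        ≤ ∑ τ ∈ Finset.Icc 2 t, |⟪r τ - r (τ-1), w τ - w (τ-1)⟫| :=
          Finset.abs_sum_le_sum_abs _ _
    _ ≤ ∑ τ ∈ Finset.Icc 2 t, (3/2*‖w τ - w (τ-1)‖^2 + 1/2*‖wmax‖^2*(1/((τ:ℝ)-1))^2) :=
          Finset.sum_le_sum hterm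
    _ = 3/2 * ∑ τ ∈ Finset.Icc 2 t, ‖w τ - w (τ-1)‖^2
          + 1/2*‖wmax‖^2 * ∑ τ ∈ Finset.Icc 2 t, (1/((τ:ℝ)-1))^2 := by
          rw [Finset.sum_add_distrib, Finset.mul_sum, Finset.mul_sum]
    _ ≤ 3/2*Dv + 1/2*‖wmax‖^2*2 := by
          apply add_le_add
          · nlinarith [hsum_le t ht]
          · apply mul_le_mul_of_nonneg_left (lem_sumsq t) (by positivity)
    _ = 3/2*Dv + ‖wmax‖^2 := by ring
  -- the equivalence
  constructor
  · rintro ⟨C, hC⟩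
    have hC0 : 0 ≤ C := le_trans (norm_nonneg _) (hC 1 le_rfl)
    refine ⟨1/2*C^2 + (β/(1-β))*(C*Real.sqrt Dv) + (β/(1-β))*(3/2*Dv + ‖wmax‖^2), ?_⟩
    intro t ht
    rw [hgdef]
    have h1 : ⟪r t, w t - w (t-1)⟫ ≤ C * Real.sqrt Dv := by
      calc ⟪r t, w t - w (t-1)⟫ ≤ ‖r t‖ * ‖w t - w (t-1)‖ := real_inner_le_norm _ _
      _ ≤ C * Real.sqrt Dv :=
          mul_le_mul (hC t ht) (hDelta t ht) (norm_nonneg _) hC0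
    have h2 : -(∑ τ ∈ Finset.Icc 2 t, ⟪r τ - r (τ-1), w τ - w (τ-1)⟫) ≤ 3/2*Dv + ‖wmax‖^2 := by
      have := (abs_le.1 (hSb t ht)).1
      linarith
    have h3 : ‖r t‖^2 ≤ C^2 := by nlinarith [hC t ht, norm_nonneg (r t)]
    have hA : (β/(1-β)) * ⟪r t, w t - w (t-1)⟫ ≤ (β/(1-β))*(C*Real.sqrt Dv) :=
      mul_le_mul_of_nonneg_left h1 hc0
    have hB : (β/(1-β)) * (-(∑ τ ∈ Finset.Icc 2 t, ⟪r τ - r (τ-1), w τ - w (τ-1)⟫))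
        ≤ (β/(1-β))*(3/2*Dv + ‖wmax‖^2) := mul_le_mul_of_nonneg_left h2 hc0
    linarith [hA, hB, h3]
  · rintro ⟨C, hC⟩
    refine ⟨2*(β/(1-β))*Real.sqrt Dv
      + Real.sqrt (max (2*C + 2*(β/(1-β))*(3/2*Dv + ‖wmax‖^2)) 0), ?_⟩
    intro t ht
    have hg := hC t ht
    rw [hgdef] at hg
    have h1 : -(‖r t‖ * Real.sqrt Dv) ≤ ⟪r t, w t - w (t-1)⟫ := by
      have ha1 : |⟪r t, w t - w (t-1)⟫| ≤ ‖r t‖ * ‖w t - w (t-1)‖ := abs_real_inner_le_norm _ _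
      have ha2 : ‖r t‖ * ‖w t - w (t-1)‖ ≤ ‖r t‖ * Real.sqrt Dv :=
        mul_le_mul_of_nonneg_left (hDelta t ht) (norm_nonneg _)
      have := (abs_le.1 ha1).1
      linarith
    have h2 : ∑ τ ∈ Finset.Icc 2 t, ⟪r τ - r (τ-1), w τ - w (τ-1)⟫ ≤ 3/2*Dv + ‖wmax‖^2 :=
      (abs_le.1 (hSb t ht)).2
    have hA : (β/(1-β)) * (-(‖r t‖ * Real.sqrt Dv)) ≤ (β/(1-β)) * ⟪r t, w t - w (t-1)⟫ :=
      mul_le_mul_of_nonneg_left h1 hc0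
    have hB : (β/(1-β)) * (∑ τ ∈ Finset.Icc 2 t, ⟪r τ - r (τ-1), w τ - w (τ-1)⟫)
        ≤ (β/(1-β)) * (3/2*Dv + ‖wmax‖^2) := mul_le_mul_of_nonneg_left h2 hc0
    have hquad : ‖r t‖^2 ≤ (2*(β/(1-β))*Real.sqrt Dv) * ‖r t‖
        + (2*C + 2*(β/(1-β))*(3/2*Dv + ‖wmax‖^2)) := by
      linarith [hA, hB, hg]
    have := lem_quad ‖r t‖ (2*(β/(1-β))*Real.sqrt Dv)
      (2*C + 2*(β/(1-β))*(3/2*Dv + ‖wmax‖^2)) (norm_nonneg _)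
      (by positivity) hquad
    exact this
end

section
/- Sublevel-set smoothness of the empirical loss: let w₀ ∈ ℝ^d, let s₀ ∈ ℝ satisfy ℓ(s₀) = N·L(w₀), and let H > 0 satisfy |ℓ'(a) − ℓ'(b)| ≤ H·|a − b| for all a, b ≥ s₀. Then for all w₁, w₂ ∈ ℝ^d with L(w₁) ≤ L(w₀) and L(w₂) ≤ L(w₀), one has ‖∇L(w₁) − ∇L(w₂)‖ ≤ (σ_max²·H/N)·‖w₁ − w₂‖. -/
open Filter Topology RealInnerProductSpace MeasureTheory

set_option linter.unusedVariables false

theorem stmt8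
    {d N : ℕ} (hN : 1 ≤ N)
    (x : Fin N → EuclideanSpace ℝ (Fin d))
    (ℓ ℓ' : ℝ → ℝ)
    (hdiff : ∀ s : ℝ, HasDerivAt ℓ (ℓ' s) s)
    (L : EuclideanSpace ℝ (Fin d) → ℝ)
    (hLdef : ∀ w : EuclideanSpace ℝ (Fin d), L w = (1 / (N : ℝ)) * ∑ i, ℓ ⟪w, x i⟫)
    (gradL : EuclideanSpace ℝ (Fin d) → EuclideanSpace ℝ (Fin d))
    (hgraddef : ∀ w : EuclideanSpace ℝ (Fin d),
      gradL w = (1 / (N : ℝ)) • ∑ i, ℓ' ⟪w, x i⟫ • x i)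
    (σmax : ℝ) (hσpos : 0 < σmax)
    (hσ : ∀ c : Fin N → ℝ, ‖∑ i, c i • x i‖ ≤ σmax * Real.sqrt (∑ i, (c i) ^ 2))
    (hℓpos : ∀ s : ℝ, 0 < ℓ s) (hℓanti : StrictAnti ℓ)
    (w₀ : EuclideanSpace ℝ (Fin d)) (s₀ H : ℝ)
    (hs₀ : ℓ s₀ = N * L w₀) (hHpos : 0 < H)
    (hH : ∀ a b : ℝ, s₀ ≤ a → s₀ ≤ b → |ℓ' a - ℓ' b| ≤ H * |a - b|) :
    ∀ w₁ w₂ : EuclideanSpace ℝ (Fin d), L w₁ ≤ L w₀ → L w₂ ≤ L w₀ →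
      ‖gradL w₁ - gradL w₂‖ ≤ (σmax ^ 2 * H / N) * ‖w₁ - w₂‖ := by
  intro w₁ w₂ h1 h2
  have hNpos : (0:ℝ) < N := by exact_mod_cast hN
  -- each inner product is ≥ s₀ on the sublevel set
  have key : ∀ w : EuclideanSpace ℝ (Fin d), L w ≤ L w₀ → ∀ i, s₀ ≤ ⟪w, x i⟫ := by
    intro w hw i
    have hsum : ℓ ⟪w, x i⟫ ≤ ∑ j, ℓ ⟪w, x j⟫ :=
      Finset.single_le_sum (f := fun j => ℓ ⟪w, x j⟫) (fun j _ => (hℓpos _).le)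
        (Finset.mem_univ i)
    have : ℓ ⟪w, x i⟫ ≤ ℓ s₀ := by
      have : ∑ j, ℓ ⟪w, x j⟫ = N * L w := by
        rw [hLdef]; field_simp
      rw [hs₀]
      calc ℓ ⟪w, x i⟫ ≤ N * L w := this ▸ hsum
        _ ≤ N * L w₀ := by nlinarith
    exact (hℓanti.le_iff_ge).mp this
  -- dual spectral bound
  have dual : ∀ u : EuclideanSpace ℝ (Fin d),
      Real.sqrt (∑ i, (⟪u, x i⟫ : ℝ) ^ 2) ≤ σmax * ‖u‖ := by
    intro u
    set T : ℝ := ∑ i, (⟪u, x i⟫ : ℝ) ^ 2 with hT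
    have hT0 : 0 ≤ T := Finset.sum_nonneg fun _ _ => sq_nonneg _
    have hTeq : T = ⟪u, ∑ i, (⟪u, x i⟫ : ℝ) • x i⟫ := by
      rw [inner_sum]
      exact Finset.sum_congr rfl fun i _ => by rw [real_inner_smul_right]; ring
    have h1 : T ≤ ‖u‖ * (σmax * Real.sqrt T) := by
      calc T = ⟪u, ∑ i, (⟪u, x i⟫ : ℝ) • x i⟫ := hTeq
        _ ≤ ‖u‖ * ‖∑ i, (⟪u, x i⟫ : ℝ) • x i‖ := real_inner_le_norm _ _
        _ ≤ ‖u‖ * (σmax * Real.sqrt T) := by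
            apply mul_le_mul_of_nonneg_left (hσ _) (norm_nonneg _)
    rcases eq_or_lt_of_le hT0 with h | h
    · rw [← h, Real.sqrt_zero]; positivity
    · have hsq : Real.sqrt T * Real.sqrt T = T := Real.mul_self_sqrt hT0
      have hs : 0 < Real.sqrt T := Real.sqrt_pos.mpr h
      nlinarith [hsq]
  set u := w₁ - w₂ with hu
  set c : Fin N → ℝ := fun i => ℓ' ⟪w₁, x i⟫ - ℓ' ⟪w₂, x i⟫ with hc
  have hcbound : ∀ i, (c i) ^ 2 ≤ H ^ 2 * (⟪u, x i⟫ : ℝ) ^ 2 := by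
    intro i
    have h := hH _ _ (key w₁ h1 i) (key w₂ h2 i)
    have hinner : (⟪w₁, x i⟫ : ℝ) - ⟪w₂, x i⟫ = ⟪u, x i⟫ := by
      rw [hu, inner_sub_left]
    have h' : |c i| ≤ H * |(⟪u, x i⟫ : ℝ)| := by
      rw [hc, ← hinner]; exact h
    have := sq_abs (c i)
    nlinarith [abs_nonneg (c i), abs_nonneg ((⟪u, x i⟫ : ℝ)), sq_abs (c i), sq_abs ((⟪u, x i⟫ : ℝ))]
  have hsumle : ∑ i, (c i) ^ 2 ≤ H ^ 2 * ∑ i, (⟪u, x i⟫ : ℝ) ^ 2 := by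
    rw [Finset.mul_sum]
    exact Finset.sum_le_sum fun i _ => hcbound i
  have hsqrt : Real.sqrt (∑ i, (c i) ^ 2) ≤ H * (σmax * ‖u‖) := by
    calc Real.sqrt (∑ i, (c i) ^ 2)
        ≤ Real.sqrt (H ^ 2 * ∑ i, (⟪u, x i⟫ : ℝ) ^ 2) := Real.sqrt_le_sqrt hsumle
      _ = H * Real.sqrt (∑ i, (⟪u, x i⟫ : ℝ) ^ 2) := by
          rw [Real.sqrt_mul (sq_nonneg H), Real.sqrt_sq hHpos.le]
      _ ≤ H * (σmax * ‖u‖) := mul_le_mul_of_nonneg_left (dual u) hHpos.le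
  have hdiffgrad : gradL w₁ - gradL w₂ = (1 / (N:ℝ)) • ∑ i, c i • x i := by
    rw [hgraddef, hgraddef, ← smul_sub, ← Finset.sum_sub_distrib]
    congr 1
    exact Finset.sum_congr rfl fun i _ => by rw [hc, sub_smul]
  rw [hdiffgrad, norm_smul]
  have : ‖∑ i, c i • x i‖ ≤ σmax * (H * (σmax * ‖u‖)) := by
    calc ‖∑ i, c i • x i‖ ≤ σmax * Real.sqrt (∑ i, (c i) ^ 2) := hσ c
      _ ≤ σmax * (H * (σmax * ‖u‖)) := mul_le_mul_of_nonneg_left hsqrt hσpos.le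
  have hn : ‖(1 / (N:ℝ))‖ = 1 / (N:ℝ) := by
    rw [Real.norm_eq_abs, abs_of_pos]; positivity
  rw [hn, hu]
  calc (1 / (N:ℝ)) * ‖∑ i, c i • x i‖
      ≤ (1 / (N:ℝ)) * (σmax * (H * (σmax * ‖w₁ - w₂‖))) := by
        apply mul_le_mul_of_nonneg_left _ (by positivity)
        simpa [hu] using this
    _ = (σmax ^ 2 * H / N) * ‖w₁ - w₂‖ := by ring
end

section
/- For an exponential-tailed loss, the loss and the negative of its derivative are equivalent up to a factor 4 near infinity: there exists x₀ ∈ ℝ such that for all s > x₀, −ℓ'(s)/4 ≤ ℓ(s) ≤ −4·ℓ'(s). -/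
open Filter Topology RealInnerProductSpace MeasureTheory

set_option linter.unusedVariables false

lemma aux_mono (f f' : ℝ → ℝ) (a : ℝ) (hd : ∀ t, HasDerivAt f (f' t) t)
    (h0 : ∀ t, a ≤ t → 0 ≤ f' t) (hlim : Tendsto f atTop (𝓝 0)) : f a ≤ 0 := by
  have mono : MonotoneOn f (Set.Ici a) := by
    apply monotoneOn_of_deriv_nonneg (convex_Ici a)
      (fun t _ => (hd t).continuousAt.continuousWithinAt)
      (fun t ht => (hd t).differentiableAt.differentiableWithinAt)
    intro t ht
    rw [(hd t).deriv]
    rw [interior_Ici] at ht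
    exact h0 t (le_of_lt ht)
  have h : ∀ᶠ t in atTop, f a ≤ f t :=
    eventually_atTop.2 ⟨a, fun t ht => mono (Set.self_mem_Ici) ht ht⟩
  exact ge_of_tendsto hlim h

lemma aux_anti (f f' : ℝ → ℝ) (a : ℝ) (hd : ∀ t, HasDerivAt f (f' t) t)
    (h0 : ∀ t, a ≤ t → f' t ≤ 0) (hlim : Tendsto f atTop (𝓝 0)) : 0 ≤ f a := by
  have := aux_mono (fun t => -f t) (fun t => -f' t) a (fun t => (hd t).neg)
    (fun t ht => neg_nonneg.2 (h0 t ht)) (by simpa using hlim.neg)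
  simpa using this

theorem stmt9
    (ℓ ℓ' : ℝ → ℝ)
    (hdiff : ∀ s : ℝ, HasDerivAt ℓ (ℓ' s) s)
    (hℓpos : ∀ s : ℝ, 0 < ℓ s) (hℓ'neg : ∀ s : ℝ, ℓ' s < 0)
    (hℓtop : Tendsto ℓ atTop (𝓝 0))
    (hℓ'top : Tendsto ℓ' atTop (𝓝 0))
    (hℓ'bot : Filter.limsup ℓ' atBot < 0)
    (μp μm xp xm : ℝ) (hμp : 0 < μp) (hμm : 0 < μm)
    (htailp : ∀ s : ℝ, xp < s → -ℓ' s ≤ (1 + Real.exp (-μp * s)) * Real.exp (-s))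
    (htailm : ∀ s : ℝ, xm < s → (1 - Real.exp (-μm * s)) * Real.exp (-s) ≤ -ℓ' s)
    :
    ∃ x₀ : ℝ, ∀ s : ℝ, x₀ < s → -ℓ' s / 4 ≤ ℓ s ∧ ℓ s ≤ -4 * ℓ' s := by
  refine ⟨max xp (max xm (max 0 (Real.log 2 / μm))), fun s hs => ?_⟩
  have hsp : xp < s := lt_of_le_of_lt (le_max_left _ _) hs
  have hsm : xm < s := lt_of_le_of_lt (le_trans (le_max_left _ _) (le_max_right _ _)) hs
  have hs0 : (0:ℝ) < s :=
    lt_of_le_of_lt (le_trans (le_trans (le_max_left _ _) (le_max_right _ _)) (le_max_right _ _)) hs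
  have hslog : Real.log 2 / μm < s :=
    lt_of_le_of_lt (le_trans (le_trans (le_max_right _ _) (le_max_right _ _)) (le_max_right _ _)) hs
  -- key exponential bounds for all t ≥ s
  have hexp_p : ∀ t : ℝ, s ≤ t → Real.exp (-μp * t) ≤ 1 := by
    intro t ht
    apply Real.exp_le_one_iff.2
    nlinarith [hs0, hμp.le]
  have hexp_m : ∀ t : ℝ, s ≤ t → Real.exp (-μm * t) ≤ 1/2 := by
    intro t ht
    have h2 : Real.log 2 < μm * t := by
      have := (div_lt_iff₀ hμm).1 (lt_of_lt_of_le hslog ht)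
      linarith
    have : Real.exp (-μm * t) < Real.exp (-Real.log 2) := by
      apply Real.exp_lt_exp.2; linarith
    rw [Real.exp_neg, Real.exp_log (by norm_num : (0:ℝ) < 2)] at this
    linarith
  -- derivative of exp(-t)
  have hde : ∀ t : ℝ, HasDerivAt (fun u => Real.exp (-u)) (-Real.exp (-t)) t := by
    intro t
    have := (Real.hasDerivAt_exp (-t)).comp t (hasDerivAt_neg t)
    simpa [mul_comm, Function.comp_def] using this
  -- pointwise derivative bounds for t ≥ s
  have hub : ∀ t : ℝ, s ≤ t → -ℓ' t ≤ 2 * Real.exp (-t) := by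
    intro t ht
    have h1 := htailp t (lt_of_lt_of_le hsp ht)
    have h2 := hexp_p t ht
    nlinarith [Real.exp_pos (-t)]
  have hlb : ∀ t : ℝ, s ≤ t → (1/2) * Real.exp (-t) ≤ -ℓ' t := by
    intro t ht
    have h1 := htailm t (lt_of_lt_of_le hsm ht)
    have h2 := hexp_m t ht
    nlinarith [Real.exp_pos (-t)]
  -- upper bound: ℓ s ≤ 2 e^{-s}
  have hup : ℓ s ≤ 2 * Real.exp (-s) := by
    have := aux_mono (fun t => ℓ t - 2 * Real.exp (-t))
      (fun t => ℓ' t - 2 * (-Real.exp (-t))) s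
      (fun t => (hdiff t).sub ((hde t).const_mul 2))
      (fun t ht => by have := hub t ht; show (0:ℝ) ≤ ℓ' t - 2 * (-Real.exp (-t)); linarith)
      (by
        have : Tendsto (fun t : ℝ => 2 * Real.exp (-t)) atTop (𝓝 0) := by
          have := (Real.tendsto_exp_neg_atTop_nhds_zero).const_mul 2
          simpa using this
        simpa using hℓtop.sub this)
    linarith
  -- lower bound: (1/2) e^{-s} ≤ ℓ s
  have hlow : (1/2) * Real.exp (-s) ≤ ℓ s := by
    have := aux_anti (fun t => ℓ t - (1/2) * Real.exp (-t))
      (fun t => ℓ' t - (1/2) * (-Real.exp (-t))) s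
      (fun t => (hdiff t).sub ((hde t).const_mul (1/2)))
      (fun t ht => by have := hlb t ht; show ℓ' t - (1/2) * (-Real.exp (-t)) ≤ 0; linarith)
      (by
        have : Tendsto (fun t : ℝ => (1/2) * Real.exp (-t)) atTop (𝓝 0) := by
          have := (Real.tendsto_exp_neg_atTop_nhds_zero).const_mul (1/2)
          simpa using this
        simpa using hℓtop.sub this)
    linarith
  have h1 := hub s le_rfl
  have h2 := hlb s le_rfl
  constructor <;> linarith
end

section
/- Second-moment bound for mini-batch gradients: assuming ℓ'(s) < 0 for all s ∈ ℝ, for every w ∈ ℝ^d the average of ‖∇L_B(w)‖² over all subsets B ⊆ Fin N with |B| = b satisfies ‖∇L(w)‖² ≤ (Nat.choose N b)⁻¹ · ∑_{B ⊆ Fin N, |B| = b} ‖∇L_B(w)‖² ≤ (N·σ_max²/(γ²·b))·‖∇L(w)‖². -/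
open Filter Topology RealInnerProductSpace MeasureTheory

set_option linter.unusedVariables false
set_option maxHeartbeats 1000000

open Finset in
lemma aux_count_stmt11 {N : ℕ} (b : ℕ) (hb : 1 ≤ b) (i : Fin N) :
    ((Finset.powersetCard b (Finset.univ : Finset (Fin N))).filter (fun B => i ∈ B)).card
      = (N - 1).choose (b - 1) := by
  have h : ((Finset.powersetCard b (Finset.univ : Finset (Fin N))).filter (fun B => i ∈ B)).card
      = (Finset.powersetCard (b - 1) ((Finset.univ : Finset (Fin N)).erase i)).card := by
    apply Finset.card_nbij' (fun B => B.erase i) (fun C => insert i C)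
    · intro B hB
      simp only [Finset.mem_coe, mem_filter, Finset.mem_powersetCard_univ] at hB
      rw [Finset.mem_coe, Finset.mem_powersetCard]
      exact ⟨Finset.erase_subset_erase i (Finset.subset_univ B),
        by rw [Finset.card_erase_of_mem hB.2, hB.1]⟩
    · intro C hC
      rw [Finset.mem_coe, Finset.mem_powersetCard] at hC
      have hiC : i ∉ C := fun h => (Finset.notMem_erase i _) (hC.1 h)
      simp only [Finset.mem_coe, mem_filter, Finset.mem_powersetCard_univ]
      refine ⟨?_, Finset.mem_insert_self i C⟩
      rw [Finset.card_insert_of_notMem hiC, hC.2]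
      omega
    · intro B hB
      simp only [Finset.mem_coe, mem_filter] at hB
      exact Finset.insert_erase hB.2
    · intro C hC
      rw [Finset.mem_coe, Finset.mem_powersetCard] at hC
      have hiC : i ∉ C := fun h => (Finset.notMem_erase i _) (hC.1 h)
      exact Finset.erase_insert hiC
  rw [h, Finset.card_powersetCard, Finset.card_erase_of_mem (Finset.mem_univ i),
    Finset.card_univ, Fintype.card_fin]

open Finset in
lemma aux_sum_stmt11 {N : ℕ} {M : Type*} [AddCommMonoid M] (b : ℕ) (hb : 1 ≤ b) (f : Fin N → M) :
    ∑ B ∈ Finset.powersetCard b (Finset.univ : Finset (Fin N)), ∑ i ∈ B, f i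
      = (N - 1).choose (b - 1) • ∑ i, f i := by
  have h1 : ∀ B ∈ Finset.powersetCard b (Finset.univ : Finset (Fin N)),
      ∑ i ∈ B, f i = ∑ i : Fin N, if i ∈ B then f i else 0 := by
    intro B hB
    rw [Finset.sum_ite_mem, Finset.univ_inter]
  rw [Finset.sum_congr rfl h1, Finset.sum_comm, Finset.smul_sum]
  refine Finset.sum_congr rfl fun i _ => ?_
  rw [← Finset.sum_filter, Finset.sum_const, aux_count_stmt11 b hb i]

theorem stmt11
    {d N : ℕ} (hN : 1 ≤ N)
    (x : Fin N → EuclideanSpace ℝ (Fin d))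
    (ℓ ℓ' : ℝ → ℝ)
    (hdiff : ∀ s : ℝ, HasDerivAt ℓ (ℓ' s) s)
    (L : EuclideanSpace ℝ (Fin d) → ℝ)
    (hLdef : ∀ w : EuclideanSpace ℝ (Fin d), L w = (1 / (N : ℝ)) * ∑ i, ℓ ⟪w, x i⟫)
    (gradL : EuclideanSpace ℝ (Fin d) → EuclideanSpace ℝ (Fin d))
    (hgraddef : ∀ w : EuclideanSpace ℝ (Fin d),
      gradL w = (1 / (N : ℝ)) • ∑ i, ℓ' ⟪w, x i⟫ • x i)
    (σmax : ℝ) (hσpos : 0 < σmax)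
    (hσ : ∀ c : Fin N → ℝ, ‖∑ i, c i • x i‖ ≤ σmax * Real.sqrt (∑ i, (c i) ^ 2))
    (wmax : EuclideanSpace ℝ (Fin d))
    (hwmax : ∀ i, 1 ≤ ⟪wmax, x i⟫)
    (hwmaxmin : ∀ v : EuclideanSpace ℝ (Fin d), (∀ i, 1 ≤ ⟪v, x i⟫) → ‖wmax‖ ≤ ‖v‖)
    (hℓ'neg : ∀ s : ℝ, ℓ' s < 0)
    (b : ℕ) (hb1 : 1 ≤ b) (hbN : b ≤ N) :
    ∀ w : EuclideanSpace ℝ (Fin d),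
      ‖gradL w‖ ^ 2 ≤ ((N.choose b : ℝ))⁻¹ *
          ∑ B ∈ Finset.powersetCard b (Finset.univ : Finset (Fin N)),
            ‖(1 / (b : ℝ)) • ∑ i ∈ B, ℓ' ⟪w, x i⟫ • x i‖ ^ 2 ∧
      ((N.choose b : ℝ))⁻¹ *
          ∑ B ∈ Finset.powersetCard b (Finset.univ : Finset (Fin N)),
            ‖(1 / (b : ℝ)) • ∑ i ∈ B, ℓ' ⟪w, x i⟫ • x i‖ ^ 2 ≤
        (N * σmax ^ 2 / ((‖wmax‖⁻¹) ^ 2 * b)) * ‖gradL w‖ ^ 2 := by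
  intro w
  set c : Fin N → ℝ := fun i => ℓ' ⟪w, x i⟫ with hc
  set g : Fin N → EuclideanSpace ℝ (Fin d) := fun i => c i • x i with hg
  set v : EuclideanSpace ℝ (Fin d) := ∑ i, g i with hv
  set P := Finset.powersetCard b (Finset.univ : Finset (Fin N)) with hP
  set S := ∑ B ∈ P, ‖(1 / (b : ℝ)) • ∑ i ∈ B, c i • x i‖ ^ 2 with hS
  have hNpos : (0 : ℝ) < N := by exact_mod_cast hN
  have hbpos : (0 : ℝ) < b := by exact_mod_cast hb1
  have hCpos : 0 < N.choose b := Nat.choose_pos hbN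
  have hCposR : (0 : ℝ) < N.choose b := by exact_mod_cast hCpos
  set K : ℕ := (N - 1).choose (b - 1) with hK
  have hid : N * K = N.choose b * b := by
    have h := Nat.add_one_mul_choose_eq (N - 1) (b - 1)
    have h1 : N - 1 + 1 = N := by omega
    have h2 : b - 1 + 1 = b := by omega
    rw [h1, h2] at h
    simpa [hK] using h
  have hidR : (N : ℝ) * K = (N.choose b : ℝ) * b := by exact_mod_cast hid
  have hcardP : P.card = N.choose b := by
    rw [hP, Finset.card_powersetCard, Finset.card_univ, Fintype.card_fin]
  have hgradv : gradL w = (1 / (N : ℝ)) • v := by rw [hgraddef]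
  have hnormgrad : ‖gradL w‖ = ‖v‖ / N := by
    rw [hgradv, norm_smul, Real.norm_eq_abs, abs_of_pos (by positivity : (0:ℝ) < 1 / (N:ℝ))]
    ring
  -- the mean of the minibatch gradients is the full gradient
  have hmean : ∑ B ∈ P, ((1 / (b : ℝ)) • ∑ i ∈ B, c i • x i)
      = (((N.choose b : ℝ)) / N) • v := by
    rw [← Finset.smul_sum]
    rw [show (∑ B ∈ P, ∑ i ∈ B, c i • x i) = K • v from aux_sum_stmt11 b hb1 g]
    rw [← Nat.cast_smul_eq_nsmul ℝ, smul_smul]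
    congr 1
    field_simp
    linear_combination hidR
  -- Jensen / Cauchy-Schwarz: first inequality
  have jensen : (∑ B ∈ P, ‖(1 / (b : ℝ)) • ∑ i ∈ B, c i • x i‖) ^ 2 ≤ (N.choose b : ℝ) * S := by
    have := sq_sum_le_card_mul_sum_sq (s := P)
      (f := fun B => ‖(1 / (b : ℝ)) • ∑ i ∈ B, c i • x i‖)
    simpa [hcardP, hS] using this
  have hnormsum : ((N.choose b : ℝ) / N) * ‖v‖ ≤ ∑ B ∈ P, ‖(1 / (b : ℝ)) • ∑ i ∈ B, c i • x i‖ := by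
    calc ((N.choose b : ℝ) / N) * ‖v‖ = ‖(((N.choose b : ℝ)) / N) • v‖ := by
          rw [norm_smul]; simp [abs_of_pos (by positivity : (0:ℝ) < (N.choose b : ℝ) / N)]
      _ = ‖∑ B ∈ P, ((1 / (b : ℝ)) • ∑ i ∈ B, c i • x i)‖ := by rw [hmean]
      _ ≤ _ := norm_sum_le _ _
  have first : ‖gradL w‖ ^ 2 ≤ ((N.choose b : ℝ))⁻¹ * S := by
    rw [hnormgrad, inv_mul_eq_div, le_div_iff₀ hCposR, div_pow]
    have key : (((N.choose b : ℝ) / N) * ‖v‖) ^ 2 ≤ (N.choose b : ℝ) * S :=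
      le_trans (by
        apply pow_le_pow_left₀ (by positivity) hnormsum 2) jensen
    have hexp : (((N.choose b : ℝ) / N) * ‖v‖) ^ 2
        = (N.choose b : ℝ) ^ 2 * (‖v‖ ^ 2 / (N : ℝ) ^ 2) := by ring
    rw [hexp] at key
    nlinarith [key, hCposR]
  -- second inequality
  have hwpos : (0 : ℝ) < ‖wmax‖ := by
    rcases eq_or_ne wmax 0 with h | h
    · exfalso
      have := hwmax ⟨0, hN⟩
      rw [h, inner_zero_left] at this
      linarith
    · exact norm_pos_iff.mpr h
  -- per-batch spectral bound
  have hperB : ∀ B ∈ P, ‖∑ i ∈ B, c i • x i‖ ^ 2 ≤ σmax ^ 2 * ∑ i ∈ B, c i ^ 2 := by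
    intro B hB
    set cB : Fin N → ℝ := fun i => if i ∈ B then c i else 0 with hcB
    have h1 : ∑ i ∈ B, c i • x i = ∑ i, cB i • x i := by
      rw [hcB]
      simp only [ite_smul, zero_smul]
      rw [Finset.sum_ite_mem, Finset.univ_inter]
    have h2 : ∑ i, cB i ^ 2 = ∑ i ∈ B, c i ^ 2 := by
      have he : ∀ i : Fin N, cB i ^ 2 = if i ∈ B then c i ^ 2 else 0 := by
        intro i
        by_cases h : i ∈ B <;> simp [hcB, h]
      rw [Finset.sum_congr rfl fun i _ => he i, Finset.sum_ite_mem, Finset.univ_inter]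
    have h3 := hσ cB
    rw [← h1] at h3
    have h4 : ‖∑ i ∈ B, c i • x i‖ ^ 2 ≤ (σmax * Real.sqrt (∑ i, cB i ^ 2)) ^ 2 :=
      pow_le_pow_left₀ (norm_nonneg _) h3 2
    calc ‖∑ i ∈ B, c i • x i‖ ^ 2 ≤ (σmax * Real.sqrt (∑ i, cB i ^ 2)) ^ 2 := h4
      _ = σmax ^ 2 * (Real.sqrt (∑ i, cB i ^ 2)) ^ 2 := by ring
      _ = σmax ^ 2 * ∑ i, cB i ^ 2 := by
          rw [Real.sq_sqrt (Finset.sum_nonneg fun i _ => sq_nonneg _)]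
      _ = σmax ^ 2 * ∑ i ∈ B, c i ^ 2 := by rw [h2]
  -- margin bound: sum of |c i| controlled by ‖wmax‖ ‖v‖
  have habs : ∑ i, |c i| ≤ ‖wmax‖ * ‖v‖ := by
    have h1 : ∑ i, |c i| = -∑ i, c i := by
      rw [← Finset.sum_neg_distrib]
      exact Finset.sum_congr rfl fun i _ => abs_of_neg (hℓ'neg _)
    have h2 : ⟪wmax, v⟫ = ∑ i, c i * ⟪wmax, x i⟫ := by
      rw [hv, inner_sum]
      exact Finset.sum_congr rfl fun i _ => real_inner_smul_right _ _ _
    have h3 : ⟪wmax, v⟫ ≤ ∑ i, c i := by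
      rw [h2]
      apply Finset.sum_le_sum
      intro i _
      have hci : c i < 0 := hℓ'neg _
      nlinarith [hci, hwmax i]
    have h4 : -⟪wmax, v⟫ ≤ ‖wmax‖ * ‖v‖ := by
      have := abs_real_inner_le_norm wmax v
      have := abs_le.mp this
      linarith [this.1]
    linarith
  have hsumsq : ∑ i, c i ^ 2 ≤ (‖wmax‖ * ‖v‖) ^ 2 := by
    have h1 : ∑ i, c i ^ 2 ≤ (∑ i, |c i|) ^ 2 := by
      have := Finset.sum_sq_le_sq_sum_of_nonneg (s := Finset.univ)
        (f := fun i => |c i|) (fun i _ => abs_nonneg _)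
      simpa [sq_abs] using this
    have h2 : (∑ i, |c i|) ^ 2 ≤ (‖wmax‖ * ‖v‖) ^ 2 :=
      pow_le_pow_left₀ (Finset.sum_nonneg fun i _ => abs_nonneg _) habs 2
    linarith
  -- combine
  have hSbound : S ≤ (1 / (b:ℝ)) ^ 2 * (σmax ^ 2 * ((K : ℝ) * (‖wmax‖ * ‖v‖) ^ 2)) := by
    have hstep : S ≤ ∑ B ∈ P, (1 / (b:ℝ)) ^ 2 * (σmax ^ 2 * ∑ i ∈ B, c i ^ 2) := by
      apply Finset.sum_le_sum
      intro B hB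
      rw [norm_smul, mul_pow]
      have : ‖(1 / (b:ℝ))‖ ^ 2 = (1 / (b:ℝ)) ^ 2 := by
        rw [Real.norm_eq_abs, sq_abs]
      rw [this]
      exact mul_le_mul_of_nonneg_left (hperB B hB) (by positivity)
    have hcomb : ∑ B ∈ P, ∑ i ∈ B, c i ^ 2 = (K : ℝ) * ∑ i, c i ^ 2 := by
      rw [show (∑ B ∈ P, ∑ i ∈ B, c i ^ 2) = K • (∑ i, c i ^ 2) from
        aux_sum_stmt11 b hb1 (fun i => c i ^ 2), nsmul_eq_mul]
    calc S ≤ ∑ B ∈ P, (1 / (b:ℝ)) ^ 2 * (σmax ^ 2 * ∑ i ∈ B, c i ^ 2) := hstep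
      _ = (1 / (b:ℝ)) ^ 2 * (σmax ^ 2 * ((K : ℝ) * ∑ i, c i ^ 2)) := by
          rw [← Finset.mul_sum, ← Finset.mul_sum, hcomb]
      _ ≤ (1 / (b:ℝ)) ^ 2 * (σmax ^ 2 * ((K : ℝ) * (‖wmax‖ * ‖v‖) ^ 2)) := by
          have hKnn : (0:ℝ) ≤ (K : ℝ) := Nat.cast_nonneg _
          apply mul_le_mul_of_nonneg_left _ (by positivity)
          apply mul_le_mul_of_nonneg_left _ (by positivity)
          exact mul_le_mul_of_nonneg_left hsumsq hKnn
  have second : ((N.choose b : ℝ))⁻¹ * S ≤ (N * σmax ^ 2 / ((‖wmax‖⁻¹) ^ 2 * b)) * ‖gradL w‖ ^ 2 := by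
    have hRHS : (N * σmax ^ 2 / ((‖wmax‖⁻¹) ^ 2 * b)) * ‖gradL w‖ ^ 2
        = ((N.choose b : ℝ))⁻¹ * ((1 / (b:ℝ)) ^ 2 * (σmax ^ 2 * ((K : ℝ) * (‖wmax‖ * ‖v‖) ^ 2))) := by
      rw [hnormgrad, div_pow]
      field_simp
      linear_combination (-‖v‖ ^ 2) * hidR
    rw [hRHS]
    exact mul_le_mul_of_nonneg_left hSbound (by positivity)
  exact ⟨first, second⟩
end

section
/- Gradient-norm sandwich: assuming ℓ'(s) < 0 for all s ∈ ℝ, for every w ∈ ℝ^d one has (γ/N)·∑_{i} (−ℓ'(⟪w, x i⟫)) ≤ ‖∇L(w)‖ ≤ (σ_max/N)·∑_{i} (−ℓ'(⟪w, x i⟫)). -/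
open RealInnerProductSpace

/-!
Write `a i = -ℓ'(⟪w, x i⟫) ≥ 0`, so that `∇L(w) = -(1/N) • ∑ a i • x i`. Pairing with the
max-margin direction, whose margins are all at least one, gives `∑ a i ≤ ‖ŵ‖ · ‖∑ a i • x i‖`
by Cauchy–Schwarz. The spectral bound gives `‖∑ a i • x i‖ ≤ σ_max · ‖a‖₂`, and `‖a‖₂ ≤ ‖a‖₁`.
-/

theorem Real.sqrt_sum_sq_le_sum_abs {ι : Type*} (s : Finset ι) (c : ι → ℝ) :
    √(∑ i ∈ s, c i ^ 2) ≤ ∑ i ∈ s, |c i| := by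
  have hsq : ∑ i ∈ s, c i ^ 2 ≤ (∑ i ∈ s, |c i|) ^ 2 := by
    simpa only [sq_abs] using
      Finset.sum_sq_le_sq_sum_of_nonneg (f := fun i => |c i|) fun i _ => abs_nonneg (c i)
  exact Real.sqrt_le_left (Finset.sum_nonneg fun i _ => abs_nonneg (c i)) |>.mpr hsq

section MarginBounds

variable {E ι : Type*} [NormedAddCommGroup E] [InnerProductSpace ℝ E] [Fintype ι]
  {x : ι → E} {a : ι → ℝ}

theorem sum_le_norm_mul_norm_sum_smul {v : E} (hv : ∀ i, 1 ≤ ⟪v, x i⟫) (ha : ∀ i, 0 ≤ a i) :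
    ∑ i, a i ≤ ‖v‖ * ‖∑ i, a i • x i‖ :=
  calc ∑ i, a i
      ≤ ∑ i, a i * ⟪v, x i⟫ :=
        Finset.sum_le_sum fun i _ => le_mul_of_one_le_right (ha i) (hv i)
    _ = ⟪v, ∑ i, a i • x i⟫ := by simp only [inner_sum, real_inner_smul_right]
    _ ≤ ‖v‖ * ‖∑ i, a i • x i‖ := real_inner_le_norm _ _

theorem inv_norm_mul_sum_le_norm_sum_smul {v : E} (hv : ∀ i, 1 ≤ ⟪v, x i⟫)
    (ha : ∀ i, 0 ≤ a i) : ‖v‖⁻¹ * ∑ i, a i ≤ ‖∑ i, a i • x i‖ :=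
  calc ‖v‖⁻¹ * ∑ i, a i
      ≤ ‖v‖⁻¹ * (‖v‖ * ‖∑ i, a i • x i‖) :=
        mul_le_mul_of_nonneg_left (sum_le_norm_mul_norm_sum_smul hv ha) (by positivity)
    _ = ‖v‖⁻¹ * ‖v‖ * ‖∑ i, a i • x i‖ := (mul_assoc _ _ _).symm
    _ ≤ ‖∑ i, a i • x i‖ := mul_le_of_le_one_left (norm_nonneg _) inv_mul_le_one

theorem norm_sum_smul_le_mul_sum_abs {σ : ℝ} (hσ_nonneg : 0 ≤ σ)
    (hσ : ∀ c : ι → ℝ, ‖∑ i, c i • x i‖ ≤ σ * √(∑ i, c i ^ 2)) (c : ι → ℝ) :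
    ‖∑ i, c i • x i‖ ≤ σ * ∑ i, |c i| :=
  (hσ c).trans <| mul_le_mul_of_nonneg_left (Real.sqrt_sum_sq_le_sum_abs _ c) hσ_nonneg

end MarginBounds

theorem stmt12_general
    {d N : ℕ}
    (x : Fin N → EuclideanSpace ℝ (Fin d))
    (ℓ' : ℝ → ℝ)
    (gradL : EuclideanSpace ℝ (Fin d) → EuclideanSpace ℝ (Fin d))
    (hgraddef : ∀ w : EuclideanSpace ℝ (Fin d),
      gradL w = (1 / (N : ℝ)) • ∑ i, ℓ' ⟪w, x i⟫ • x i)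
    (σmax : ℝ) (hσpos : 0 < σmax)
    (hσ : ∀ c : Fin N → ℝ, ‖∑ i, c i • x i‖ ≤ σmax * Real.sqrt (∑ i, (c i) ^ 2))
    (wmax : EuclideanSpace ℝ (Fin d))
    (hwmax : ∀ i, 1 ≤ ⟪wmax, x i⟫)
    (hℓ'neg : ∀ s : ℝ, ℓ' s < 0) :
    ∀ w : EuclideanSpace ℝ (Fin d),
      (‖wmax‖⁻¹ / N) * ∑ i, (-ℓ' ⟪w, x i⟫) ≤ ‖gradL w‖ ∧
      ‖gradL w‖ ≤ (σmax / N) * ∑ i, (-ℓ' ⟪w, x i⟫) := by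
  intro w
  set a : Fin N → ℝ := fun i => -ℓ' ⟪w, x i⟫
  have ha : ∀ i, 0 ≤ a i := fun i => (neg_pos.mpr (hℓ'neg _)).le
  have hgrad : ‖gradL w‖ = ‖∑ i, a i • x i‖ / N := by
    simp only [hgraddef, a, neg_smul, Finset.sum_neg_distrib, norm_smul, norm_neg, one_div,
      norm_inv, RCLike.norm_natCast, inv_mul_eq_div]
  rw [hgrad, div_mul_eq_mul_div, div_mul_eq_mul_div]
  constructor
  · exact div_le_div_of_nonneg_right (inv_norm_mul_sum_le_norm_sum_smul hwmax ha) N.cast_nonneg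
  · refine div_le_div_of_nonneg_right ?_ N.cast_nonneg
    simpa only [abs_of_nonneg (ha _)] using norm_sum_smul_le_mul_sum_abs hσpos.le hσ a

theorem stmt12
    {d N : ℕ} (hN : 1 ≤ N)
    (x : Fin N → EuclideanSpace ℝ (Fin d))
    (ℓ ℓ' : ℝ → ℝ)
    (hdiff : ∀ s : ℝ, HasDerivAt ℓ (ℓ' s) s)
    (L : EuclideanSpace ℝ (Fin d) → ℝ)
    (hLdef : ∀ w : EuclideanSpace ℝ (Fin d), L w = (1 / (N : ℝ)) * ∑ i, ℓ ⟪w, x i⟫)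
    (gradL : EuclideanSpace ℝ (Fin d) → EuclideanSpace ℝ (Fin d))
    (hgraddef : ∀ w : EuclideanSpace ℝ (Fin d),
      gradL w = (1 / (N : ℝ)) • ∑ i, ℓ' ⟪w, x i⟫ • x i)
    (σmax : ℝ) (hσpos : 0 < σmax)
    (hσ : ∀ c : Fin N → ℝ, ‖∑ i, c i • x i‖ ≤ σmax * Real.sqrt (∑ i, (c i) ^ 2))
    (wmax : EuclideanSpace ℝ (Fin d))
    (hwmax : ∀ i, 1 ≤ ⟪wmax, x i⟫)
    (hwmaxmin : ∀ v : EuclideanSpace ℝ (Fin d), (∀ i, 1 ≤ ⟪v, x i⟫) → ‖wmax‖ ≤ ‖v‖)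
    (hℓ'neg : ∀ s : ℝ, ℓ' s < 0) :
    ∀ w : EuclideanSpace ℝ (Fin d),
      (‖wmax‖⁻¹ / N) * ∑ i, (-ℓ' ⟪w, x i⟫) ≤ ‖gradL w‖ ∧
      ‖gradL w‖ ≤ (σmax / N) * ∑ i, (-ℓ' ⟪w, x i⟫) :=
  stmt12_general x ℓ' gradL hgraddef σmax hσpos hσ wmax hwmax hℓ'neg
end

section
/- One-step expected descent for mini-batch gradient steps: assuming ℓ is globally H-smooth and ℓ'(s) < 0 for all s, for every u, w ∈ ℝ^d and every η > 0, the average over all subsets B ⊆ Fin N with |B| = b satisfies (Nat.choose N b)⁻¹ · ∑_{B ⊆ Fin N, |B| = b} L(u − η·∇L_B(w)) ≤ L(u) − η·⟪∇L(w), ∇L(u)⟫ + (H·σ_max⁴·η²/(2·b·γ²))·‖∇L(w)‖². -/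
open Filter Topology RealInnerProductSpace MeasureTheory

set_option linter.unusedVariables false
set_option maxHeartbeats 1000000

lemma scalar_descent (ℓ ℓ' : ℝ → ℝ) (hdiff : ∀ s : ℝ, HasDerivAt ℓ (ℓ' s) s)
    (H : ℝ) (hHpos : 0 < H) (hH : ∀ a b : ℝ, |ℓ' a - ℓ' b| ≤ H * |a - b|) (a t : ℝ) :
    ℓ (a + t) ≤ ℓ a + ℓ' a * t + H / 2 * t ^ 2 := by
  set g : ℝ → ℝ := fun s => ℓ (a + s * t) - ℓ' a * (s * t) - H / 2 * s ^ 2 * t ^ 2 with hg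
  have hder : ∀ s : ℝ, HasDerivAt g (ℓ' (a + s * t) * t - ℓ' a * t - H * s * t ^ 2) s := by
    intro s
    have h1 : HasDerivAt (fun s : ℝ => a + s * t) t s := by
      simpa using ((hasDerivAt_id s).mul_const t).const_add a
    have h2 : HasDerivAt (fun s : ℝ => ℓ (a + s * t)) (ℓ' (a + s * t) * t) s :=
      (hdiff (a + s * t)).comp s h1
    have h3 : HasDerivAt (fun s : ℝ => ℓ' a * (s * t)) (ℓ' a * t) s := by
      simpa using ((hasDerivAt_id s).mul_const t).const_mul (ℓ' a)
    have h4 : HasDerivAt (fun s : ℝ => H / 2 * s ^ 2 * t ^ 2) (H * s * t ^ 2) s := by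
      have := (((hasDerivAt_pow 2 s)).const_mul (H / 2)).mul_const (t ^ 2)
      exact this.congr_deriv (by rw [show (2:ℕ) - 1 = 1 from rfl, pow_one]; push_cast; ring)
    exact (h2.sub h3).sub h4
  have hanti : AntitoneOn g (Set.Icc 0 1) := by
    apply antitoneOn_of_deriv_nonpos (convex_Icc 0 1)
    · exact fun s hs => (hder s).continuousAt.continuousWithinAt
    · exact fun s hs => (hder s).differentiableAt.differentiableWithinAt
    · intro s hs
      rw [interior_Icc] at hs
      rw [(hder s).deriv]
      have h5 : |ℓ' (a + s * t) - ℓ' a| ≤ H * |s * t| := by simpa using hH (a + s * t) a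
      have h6 : (ℓ' (a + s * t) - ℓ' a) * t ≤ H * |s * t| * |t| := by
        calc (ℓ' (a + s * t) - ℓ' a) * t ≤ |(ℓ' (a + s * t) - ℓ' a) * t| := le_abs_self _
        _ = |ℓ' (a + s * t) - ℓ' a| * |t| := abs_mul _ _
        _ ≤ H * |s * t| * |t| := by
            apply mul_le_mul_of_nonneg_right h5 (abs_nonneg t)
      have h7 : H * |s * t| * |t| = H * s * t ^ 2 := by
        rw [abs_mul, abs_of_pos hs.1]
        calc H * (s * |t|) * |t| = H * s * (|t| * |t|) := by ring
        _ = H * s * t ^ 2 := by rw [abs_mul_abs_self, sq]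
      nlinarith [h6, h7]
  have := hanti (Set.mem_Icc.2 ⟨le_refl 0, zero_le_one⟩) (Set.mem_Icc.2 ⟨zero_le_one, le_refl 1⟩) zero_le_one
  simp only [hg] at this
  norm_num at this
  linarith


lemma count_mem_powersetCard {N b : ℕ} (hb : 1 ≤ b) (i : Fin N) :
    ((Finset.powersetCard b (Finset.univ : Finset (Fin N))).filter (fun B => i ∈ B)).card
      = (N - 1).choose (b - 1) := by
  have key : ((Finset.powersetCard b (Finset.univ : Finset (Fin N))).filter (fun B => i ∈ B)).card
      = (Finset.powersetCard (b - 1) ((Finset.univ : Finset (Fin N)).erase i)).card := by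
    apply Finset.card_bij (fun B _ => Finset.erase B i)
    · intro B hB
      simp only [Finset.mem_filter, Finset.mem_powersetCard] at hB
      rw [Finset.mem_powersetCard]
      refine ⟨fun j hj => ?_, ?_⟩
      · rw [Finset.mem_erase] at hj ⊢
        exact ⟨hj.1, Finset.mem_univ _⟩
      · rw [Finset.card_erase_of_mem hB.2, hB.1.2]
    · intro B hB B' hB' h
      simp only [Finset.mem_filter, Finset.mem_powersetCard] at hB hB'
      have := congrArg (insert i) h
      rwa [Finset.insert_erase hB.2, Finset.insert_erase hB'.2] at this
    · intro t ht
      rw [Finset.mem_powersetCard] at ht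
      refine ⟨insert i t, ?_, ?_⟩
      · simp only [Finset.mem_filter, Finset.mem_powersetCard]
        have hi : i ∉ t := fun h => (Finset.mem_erase.1 (ht.1 h)).1 rfl
        refine ⟨⟨fun j _ => Finset.mem_univ _, ?_⟩, Finset.mem_insert_self _ _⟩
        rw [Finset.card_insert_of_notMem hi, ht.2]
        omega
      · have hi : i ∉ t := fun h => (Finset.mem_erase.1 (ht.1 h)).1 rfl
        rw [Finset.erase_insert hi]
  rw [key, Finset.card_powersetCard, Finset.card_erase_of_mem (Finset.mem_univ i),
    Finset.card_univ, Fintype.card_fin]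

lemma sum_powersetCard_sum {N b : ℕ} (hb : 1 ≤ b) (f : Fin N → ℝ) :
    ∑ B ∈ Finset.powersetCard b (Finset.univ : Finset (Fin N)), ∑ i ∈ B, f i
      = ((N - 1).choose (b - 1) : ℝ) * ∑ i, f i := by
  have h1 : ∀ B ∈ Finset.powersetCard b (Finset.univ : Finset (Fin N)),
      ∑ i ∈ B, f i = ∑ i : Fin N, if i ∈ B then f i else 0 := by
    intro B hB
    rw [Finset.sum_ite_mem, Finset.univ_inter]
  rw [Finset.sum_congr rfl h1, Finset.sum_comm, Finset.mul_sum]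
  apply Finset.sum_congr rfl
  intro i _
  rw [Finset.sum_ite, Finset.sum_const_zero, add_zero, Finset.sum_const,
    count_mem_powersetCard hb i, nsmul_eq_mul]

theorem stmt14
    {d N : ℕ} (hN : 1 ≤ N)
    (x : Fin N → EuclideanSpace ℝ (Fin d))
    (ℓ ℓ' : ℝ → ℝ)
    (hdiff : ∀ s : ℝ, HasDerivAt ℓ (ℓ' s) s)
    (L : EuclideanSpace ℝ (Fin d) → ℝ)
    (hLdef : ∀ w : EuclideanSpace ℝ (Fin d), L w = (1 / (N : ℝ)) * ∑ i, ℓ ⟪w, x i⟫)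
    (gradL : EuclideanSpace ℝ (Fin d) → EuclideanSpace ℝ (Fin d))
    (hgraddef : ∀ w : EuclideanSpace ℝ (Fin d),
      gradL w = (1 / (N : ℝ)) • ∑ i, ℓ' ⟪w, x i⟫ • x i)
    (σmax : ℝ) (hσpos : 0 < σmax)
    (hσ : ∀ c : Fin N → ℝ, ‖∑ i, c i • x i‖ ≤ σmax * Real.sqrt (∑ i, (c i) ^ 2))
    (wmax : EuclideanSpace ℝ (Fin d))
    (hwmax : ∀ i, 1 ≤ ⟪wmax, x i⟫)
    (hwmaxmin : ∀ v : EuclideanSpace ℝ (Fin d), (∀ i, 1 ≤ ⟪v, x i⟫) → ‖wmax‖ ≤ ‖v‖)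
    (hℓ'neg : ∀ s : ℝ, ℓ' s < 0)
    (H : ℝ) (hHpos : 0 < H)
    (hH : ∀ a b : ℝ, |ℓ' a - ℓ' b| ≤ H * |a - b|)
    (b : ℕ) (hb1 : 1 ≤ b) (hbN : b ≤ N) :
    ∀ u w : EuclideanSpace ℝ (Fin d), ∀ η : ℝ, 0 < η →
      ((N.choose b : ℝ))⁻¹ *
          ∑ B ∈ Finset.powersetCard b (Finset.univ : Finset (Fin N)),
            L (u - η • ((1 / (b : ℝ)) • ∑ i ∈ B, ℓ' ⟪w, x i⟫ • x i)) ≤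
        L u - η * ⟪gradL w, gradL u⟫ +
          (H * σmax ^ 4 * η ^ 2 / (2 * b * (‖wmax‖⁻¹) ^ 2)) * ‖gradL w‖ ^ 2 := by
  intro u w η hη
  have hNpos : (0:ℝ) < N := by exact_mod_cast Nat.lt_of_lt_of_le Nat.zero_lt_one hN
  have hbpos : (0:ℝ) < b := by exact_mod_cast Nat.lt_of_lt_of_le Nat.zero_lt_one hb1
  have hCpos : (0:ℝ) < (N.choose b : ℝ) := by exact_mod_cast Nat.choose_pos hbN
  set C : ℝ := (N.choose b : ℝ) with hC
  set C' : ℝ := ((N - 1).choose (b - 1) : ℝ) with hC'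
  have hCb : C * b = (N:ℝ) * C' := by
    rw [hC, hC']
    have h := Nat.add_one_mul_choose_eq (N-1) (b-1)
    rw [Nat.sub_add_cancel hN,
      Nat.sub_add_cancel hb1] at h
    exact_mod_cast h.symm
  -- spectral bound on inner products
  have lemB : ∀ z : EuclideanSpace ℝ (Fin d),
      ∑ i, (⟪z, x i⟫ : ℝ) ^ 2 ≤ σmax ^ 2 * ‖z‖ ^ 2 := by
    intro z
    set S := Real.sqrt (∑ i, (⟪z, x i⟫ : ℝ) ^ 2) with hS
    have hsum_nonneg : (0:ℝ) ≤ ∑ i, (⟪z, x i⟫ : ℝ) ^ 2 :=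
      Finset.sum_nonneg fun i _ => sq_nonneg _
    have hSsq : S ^ 2 = ∑ i, (⟪z, x i⟫ : ℝ) ^ 2 := Real.sq_sqrt hsum_nonneg
    have key : ∑ i, (⟪z, x i⟫ : ℝ) ^ 2 = ⟪z, ∑ i, (⟪z, x i⟫ : ℝ) • x i⟫ := by
      rw [inner_sum]
      refine (Finset.sum_congr rfl fun i _ => ?_).symm
      rw [real_inner_smul_right]; ring
    have h2 : (⟪z, ∑ i, (⟪z, x i⟫ : ℝ) • x i⟫ : ℝ) ≤ ‖z‖ * (σmax * S) :=
      le_trans (real_inner_le_norm _ _)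
        (mul_le_mul_of_nonneg_left (hσ _) (norm_nonneg _))
    have h3 : S ^ 2 ≤ ‖z‖ * (σmax * S) := by rw [hSsq, key]; exact h2
    have hSnn : 0 ≤ S := Real.sqrt_nonneg _
    rw [← hSsq]
    nlinarith [sq_nonneg (S - σmax * ‖z‖), norm_nonneg z, hσpos.le]
  -- descent lemma for L
  have hdesc : ∀ v δ : EuclideanSpace ℝ (Fin d),
      L (v + δ) ≤ L v + ⟪gradL v, δ⟫ + (H * σmax ^ 2 / (2 * N)) * ‖δ‖ ^ 2 := by
    intro v δ
    have hstep : ∀ i : Fin N, ℓ ⟪v + δ, x i⟫ ≤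
        ℓ ⟪v, x i⟫ + ℓ' ⟪v, x i⟫ * ⟪δ, x i⟫ + H / 2 * (⟪δ, x i⟫:ℝ) ^ 2 := by
      intro i
      have : (⟪v + δ, x i⟫ : ℝ) = ⟪v, x i⟫ + ⟪δ, x i⟫ := inner_add_left _ _ _
      rw [this]
      exact scalar_descent ℓ ℓ' hdiff H hHpos hH _ _
    have hinner : (⟪gradL v, δ⟫ : ℝ) = (1/(N:ℝ)) * ∑ i, ℓ' ⟪v, x i⟫ * ⟪δ, x i⟫ := by
      rw [hgraddef, real_inner_smul_left, sum_inner]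
      congr 1
      refine Finset.sum_congr rfl fun i _ => ?_
      rw [real_inner_smul_left, real_inner_comm (x i) δ]
    rw [hLdef, hLdef]
    have hsum := Finset.sum_le_sum (fun i (_ : i ∈ Finset.univ) => hstep i)
    have h1 : (1/(N:ℝ)) * ∑ i, ℓ ⟪v + δ, x i⟫ ≤
        (1/(N:ℝ)) * ∑ i, (ℓ ⟪v, x i⟫ + ℓ' ⟪v, x i⟫ * ⟪δ, x i⟫ + H / 2 * (⟪δ, x i⟫:ℝ) ^ 2) := by
      apply mul_le_mul_of_nonneg_left hsum
      positivity
    have h2 : (1/(N:ℝ)) * ∑ i, (ℓ ⟪v, x i⟫ + ℓ' ⟪v, x i⟫ * ⟪δ, x i⟫ + H / 2 * (⟪δ, x i⟫:ℝ) ^ 2)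
        = (1/(N:ℝ)) * ∑ i, ℓ ⟪v, x i⟫ + ⟪gradL v, δ⟫
          + (H/(2*(N:ℝ))) * ∑ i, (⟪δ, x i⟫:ℝ) ^ 2 := by
      rw [hinner, Finset.sum_add_distrib, Finset.sum_add_distrib, ← Finset.mul_sum]
      ring
    have h3 : (H/(2*(N:ℝ))) * ∑ i, (⟪δ, x i⟫:ℝ) ^ 2
        ≤ (H * σmax ^ 2 / (2 * N)) * ‖δ‖ ^ 2 := by
      have := mul_le_mul_of_nonneg_left (lemB δ) (le_of_lt (by positivity : (0:ℝ) < H/(2*(N:ℝ))))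
      calc (H/(2*(N:ℝ))) * ∑ i, (⟪δ, x i⟫:ℝ) ^ 2 ≤ (H/(2*(N:ℝ))) * (σmax ^ 2 * ‖δ‖ ^ 2) := this
        _ = (H * σmax ^ 2 / (2 * N)) * ‖δ‖ ^ 2 := by ring
    linarith [h1, h2 ▸ h1]
  set g : Fin N → ℝ := fun i => ℓ' ⟪w, x i⟫ with hgdef
  set I : ℝ := ⟪gradL w, gradL u⟫ with hI
  set P := Finset.powersetCard b (Finset.univ : Finset (Fin N)) with hP
  -- per-B descent bound
  have hperB : ∀ B ∈ P, L (u - η • ((1/(b:ℝ)) • ∑ i ∈ B, g i • x i)) ≤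
      L u - (η/b) * ⟪gradL u, ∑ i ∈ B, g i • x i⟫
        + (H*σmax^2/(2*N)) * ((η/b)^2 * ‖∑ i ∈ B, g i • x i‖^2) := by
    intro B _
    set S := ∑ i ∈ B, g i • x i
    have heq : u - η • ((1/(b:ℝ)) • S) = u + (-(η • ((1/(b:ℝ)) • S))) := by
      rw [sub_eq_add_neg]
    have h := hdesc u (-(η • ((1/(b:ℝ)) • S)))
    rw [heq]
    have hin : (⟪gradL u, -(η • ((1/(b:ℝ)) • S))⟫:ℝ) = -((η/b) * ⟪gradL u, S⟫) := by
      rw [inner_neg_right, real_inner_smul_right, real_inner_smul_right]; ring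
    have hnrm : ‖-(η • ((1/(b:ℝ)) • S))‖^2 = (η/b)^2 * ‖S‖^2 := by
      rw [norm_neg, norm_smul, norm_smul, Real.norm_eq_abs, Real.norm_eq_abs,
        abs_of_pos hη, abs_of_pos (by positivity : (0:ℝ) < 1/(b:ℝ))]
      ring
    rw [hin, hnrm] at h
    linarith [h]
  -- sum of inner products
  have hinner_sum : ∑ B ∈ P, (⟪gradL u, ∑ i ∈ B, g i • x i⟫:ℝ)
      = C' * ((N:ℝ) * I) := by
    have h1 : ∀ B : Finset (Fin N), (⟪gradL u, ∑ i ∈ B, g i • x i⟫:ℝ)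
        = ∑ i ∈ B, g i * ⟪gradL u, x i⟫ := by
      intro B
      rw [inner_sum]
      exact Finset.sum_congr rfl fun i _ => by rw [real_inner_smul_right]
    simp only [h1]
    rw [sum_powersetCard_sum hb1, ← hC']
    congr 1
    have h2 : I = (1/(N:ℝ)) * ∑ i, g i * ⟪gradL u, x i⟫ := by
      rw [hI, hgraddef w, real_inner_smul_left, sum_inner]
      congr 1
      exact Finset.sum_congr rfl fun i _ => by
        rw [real_inner_smul_left, real_inner_comm (x i) (gradL u)]
    rw [h2]
    field_simp
  -- sum of squared norms
  have hnorm_sum : ∑ B ∈ P, ‖∑ i ∈ B, g i • x i‖^2 ≤ σmax^2 * (C' * ∑ i, g i ^ 2) := by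
    have h1 : ∀ B ∈ P, ‖∑ i ∈ B, g i • x i‖^2 ≤ σmax^2 * ∑ i ∈ B, g i ^ 2 := by
      intro B _
      have hc := hσ (fun i => if i ∈ B then g i else 0)
      have e1 : ∑ i, (if i ∈ B then g i else 0) • x i = ∑ i ∈ B, g i • x i := by
        simp only [ite_smul, zero_smul]
        rw [Finset.sum_ite_mem, Finset.univ_inter]
      have e2 : ∑ i, (if i ∈ B then g i else 0) ^ 2 = ∑ i ∈ B, g i ^ 2 := by
        simp only [apply_ite (· ^ 2), ne_eq, OfNat.ofNat_ne_zero, not_false_eq_true,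
          zero_pow]
        rw [Finset.sum_ite_mem, Finset.univ_inter]
      rw [e1, e2] at hc
      have hT : (0:ℝ) ≤ ∑ i ∈ B, g i ^ 2 := Finset.sum_nonneg fun i _ => sq_nonneg _
      calc ‖∑ i ∈ B, g i • x i‖^2 ≤ (σmax * Real.sqrt (∑ i ∈ B, g i ^ 2))^2 :=
            pow_le_pow_left₀ (norm_nonneg _) hc 2
        _ = σmax^2 * ∑ i ∈ B, g i ^ 2 := by rw [mul_pow, Real.sq_sqrt hT]
    calc ∑ B ∈ P, ‖∑ i ∈ B, g i • x i‖^2 ≤ ∑ B ∈ P, σmax^2 * ∑ i ∈ B, g i ^ 2 :=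
          Finset.sum_le_sum h1
      _ = σmax^2 * ∑ B ∈ P, ∑ i ∈ B, g i ^ 2 := by rw [← Finset.mul_sum]
      _ = σmax^2 * (C' * ∑ i, g i ^ 2) := by rw [sum_powersetCard_sum hb1, ← hC']
  -- wmax nonzero
  have hWpos : (0:ℝ) < ‖wmax‖ := by
    rcases eq_or_ne wmax 0 with h0 | h0
    · exfalso
      have h := hwmax ⟨0, hN⟩
      rw [h0, inner_zero_left] at h
      norm_num at h
    · exact norm_pos_iff.2 h0
  -- margin bound
  have habs : ∑ i, |g i| ≤ (N:ℝ) * ‖wmax‖ * ‖gradL w‖ := by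
    have hSg : ∑ i, g i • x i = (N:ℝ) • gradL w := by
      rw [hgraddef w, smul_smul, mul_one_div, div_self (ne_of_gt hNpos), one_smul]
    have h1 : ∑ i, |g i| ≤ ∑ i, (-(g i)) * ⟪wmax, x i⟫ := by
      apply Finset.sum_le_sum
      intro i _
      rw [abs_of_neg (hℓ'neg _)]
      exact le_mul_of_one_le_right (by linarith [hℓ'neg (⟪w, x i⟫:ℝ)]) (hwmax i)
    have h2 : ∑ i, (-(g i)) * (⟪wmax, x i⟫:ℝ) = ⟪wmax, -((N:ℝ) • gradL w)⟫ := by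
      rw [← hSg, inner_neg_right, inner_sum, ← Finset.sum_neg_distrib]
      exact Finset.sum_congr rfl fun i _ => by rw [real_inner_smul_right]; ring
    have h3 : (⟪wmax, -((N:ℝ) • gradL w)⟫:ℝ) ≤ ‖wmax‖ * ((N:ℝ) * ‖gradL w‖) := by
      calc (⟪wmax, -((N:ℝ) • gradL w)⟫:ℝ) ≤ ‖wmax‖ * ‖-((N:ℝ) • gradL w)‖ :=
            real_inner_le_norm _ _
        _ = ‖wmax‖ * ((N:ℝ) * ‖gradL w‖) := by
            rw [norm_neg, norm_smul, Real.norm_eq_abs, abs_of_pos hNpos]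
    calc ∑ i, |g i| ≤ ∑ i, (-(g i)) * ⟪wmax, x i⟫ := h1
      _ = ⟪wmax, -((N:ℝ) • gradL w)⟫ := h2
      _ ≤ ‖wmax‖ * ((N:ℝ) * ‖gradL w‖) := h3
      _ = (N:ℝ) * ‖wmax‖ * ‖gradL w‖ := by ring
  have hG : ∑ i, g i ^ 2 ≤ ((N:ℝ) * ‖wmax‖ * ‖gradL w‖)^2 := by
    have h1 : ∑ i, g i ^ 2 ≤ (∑ i, |g i|)^2 := by
      calc ∑ i, g i ^ 2 = ∑ i, |g i| * |g i| := by
            exact Finset.sum_congr rfl fun i _ => by rw [sq, ← abs_mul_abs_self]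
        _ ≤ ∑ i, |g i| * (∑ j, |g j|) := Finset.sum_le_sum fun i _ =>
            mul_le_mul_of_nonneg_left
              (Finset.single_le_sum (fun j _ => abs_nonneg (g j)) (Finset.mem_univ i))
              (abs_nonneg _)
        _ = (∑ i, |g i|)^2 := by rw [← Finset.sum_mul, sq]
    calc ∑ i, g i ^ 2 ≤ (∑ i, |g i|)^2 := h1
      _ ≤ ((N:ℝ) * ‖wmax‖ * ‖gradL w‖)^2 :=
          pow_le_pow_left₀ (Finset.sum_nonneg fun i _ => abs_nonneg _) habs 2
  -- sum the per-B bounds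
  have hPcard : (P.card : ℝ) = C := by
    rw [hP, Finset.card_powersetCard, Finset.card_univ, Fintype.card_fin, hC]
  have hsumB : ∑ B ∈ P, L (u - η • ((1/(b:ℝ)) • ∑ i ∈ B, g i • x i))
      ≤ C * L u - (η/b) * (C' * ((N:ℝ) * I))
        + (H*σmax^2/(2*N)) * ((η/b)^2 * (σmax^2 * (C' * ∑ i, g i ^ 2))) := by
    calc ∑ B ∈ P, L (u - η • ((1/(b:ℝ)) • ∑ i ∈ B, g i • x i))
        ≤ ∑ B ∈ P, (L u - (η/b) * ⟪gradL u, ∑ i ∈ B, g i • x i⟫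
            + (H*σmax^2/(2*N)) * ((η/b)^2 * ‖∑ i ∈ B, g i • x i‖^2)) :=
          Finset.sum_le_sum hperB
      _ = C * L u - (η/b) * (C' * ((N:ℝ) * I))
            + (H*σmax^2/(2*N)) * ((η/b)^2 * ∑ B ∈ P, ‖∑ i ∈ B, g i • x i‖^2) := by
          simp only [Finset.sum_add_distrib, Finset.sum_sub_distrib, Finset.sum_const,
            ← Finset.mul_sum, nsmul_eq_mul, hPcard, hinner_sum]
      _ ≤ C * L u - (η/b) * (C' * ((N:ℝ) * I))
            + (H*σmax^2/(2*N)) * ((η/b)^2 * (σmax^2 * (C' * ∑ i, g i ^ 2))) := by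
          have hcoef : (0:ℝ) ≤ H*σmax^2/(2*N) := by positivity
          have hcoef2 : (0:ℝ) ≤ (η/b)^2 := sq_nonneg _
          have := mul_le_mul_of_nonneg_left
            (mul_le_mul_of_nonneg_left hnorm_sum hcoef2) hcoef
          linarith [this]
  -- final arithmetic
  have hC'val : C' = C * b / N := by
    rw [eq_div_iff (ne_of_gt hNpos)]
    linarith [hCb]
  have step2 : C⁻¹ * (C * L u - (η/b) * (C' * ((N:ℝ) * I))
      + (H*σmax^2/(2*N)) * ((η/b)^2 * (σmax^2 * (C' * ∑ i, g i ^ 2))))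
      = L u - η * I + (H*σmax^4*η^2/(2*(b:ℝ)*(N:ℝ)^2)) * ∑ i, g i ^ 2 := by
    rw [hC'val]
    field_simp
  have step3 : (H*σmax^4*η^2/(2*(b:ℝ)*(N:ℝ)^2)) * ∑ i, g i ^ 2
      ≤ (H * σmax ^ 4 * η ^ 2 / (2 * b * (‖wmax‖⁻¹) ^ 2)) * ‖gradL w‖ ^ 2 := by
    have e : (H*σmax^4*η^2/(2*(b:ℝ)*(N:ℝ)^2)) * ((N:ℝ) * ‖wmax‖ * ‖gradL w‖)^2
        = (H * σmax ^ 4 * η ^ 2 / (2 * b * (‖wmax‖⁻¹) ^ 2)) * ‖gradL w‖ ^ 2 := by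
      field_simp
    calc (H*σmax^4*η^2/(2*(b:ℝ)*(N:ℝ)^2)) * ∑ i, g i ^ 2
        ≤ (H*σmax^4*η^2/(2*(b:ℝ)*(N:ℝ)^2)) * ((N:ℝ) * ‖wmax‖ * ‖gradL w‖)^2 :=
          mul_le_mul_of_nonneg_left hG (by positivity)
      _ = _ := e
  have step1 : C⁻¹ * ∑ B ∈ P, L (u - η • ((1/(b:ℝ)) • ∑ i ∈ B, g i • x i))
      ≤ C⁻¹ * (C * L u - (η/b) * (C' * ((N:ℝ) * I))
        + (H*σmax^2/(2*N)) * ((η/b)^2 * (σmax^2 * (C' * ∑ i, g i ^ 2)))) :=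
    mul_le_mul_of_nonneg_left hsumB (inv_nonneg.2 hCpos.le)
  calc C⁻¹ * ∑ B ∈ P, L (u - η • ((1/(b:ℝ)) • ∑ i ∈ B, g i • x i))
      ≤ L u - η * I + (H*σmax^4*η^2/(2*(b:ℝ)*(N:ℝ)^2)) * ∑ i, g i ^ 2 := by
        rw [← step2]; exact step1
    _ ≤ L u - η * I + (H * σmax ^ 4 * η ^ 2 / (2 * b * (‖wmax‖⁻¹) ^ 2)) * ‖gradL w‖ ^ 2 := by
        linarith [step3]
end

section
/- For every integer t ≥ 2, the function f_t(x) = (1 − xᵗ)/(x·(1 − x^{t−1})) is monotonically decreasing on the interval (0, 1); moreover, for every x ∈ (0, 1), f_t(x) ≥ (f_t(x⁴))^{1/4}. -/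
open Filter Topology RealInnerProductSpace MeasureTheory

set_option linter.unusedVariables false

-- Auxiliary: rewrite f_t(x) as 1 + 1/(x * geometric sum)
set_option maxHeartbeats 1000000 in
lemma aux_f_eq (t : ℕ) (ht : 2 ≤ t) (x : ℝ) (hx : x ∈ Set.Ioo (0:ℝ) 1) :
    (1 - x ^ t) / (x * (1 - x ^ (t - 1))) =
      1 + 1 / (x * ∑ i ∈ Finset.range (t - 1), x ^ i) := by
  obtain ⟨hx0, hx1⟩ := hx
  have hxne : (1 : ℝ) - x ≠ 0 := by linarith
  have h1 : (1 : ℝ) - x ^ t = (1 - x) * ∑ i ∈ Finset.range t, x ^ i := by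
    linear_combination geom_sum_mul x t
  have h2 : (1 : ℝ) - x ^ (t - 1) = (1 - x) * ∑ i ∈ Finset.range (t - 1), x ^ i := by
    linear_combination geom_sum_mul x (t - 1)
  have ht1 : t - 1 + 1 = t := by omega
  have h3 : ∑ i ∈ Finset.range t, x ^ i
      = x * (∑ i ∈ Finset.range (t - 1), x ^ i) + 1 := by
    have := geom_sum_succ (x := x) (n := t - 1)
    rwa [ht1] at this
  have hsum : 0 < ∑ i ∈ Finset.range (t - 1), x ^ i := by
    apply Finset.sum_pos (fun i _ => pow_pos hx0 i)
    rw [Finset.nonempty_range_iff]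
    omega
  rw [h1, h2, h3, div_eq_iff (mul_ne_zero hx0.ne' (mul_ne_zero hxne hsum.ne'))]
  field_simp

theorem stmt19 (t : ℕ) (ht : 2 ≤ t) :
    AntitoneOn (fun x : ℝ => (1 - x ^ t) / (x * (1 - x ^ (t - 1)))) (Set.Ioo 0 1) ∧
    ∀ x ∈ Set.Ioo (0 : ℝ) 1,
      ((1 - (x ^ 4) ^ t) / ((x ^ 4) * (1 - (x ^ 4) ^ (t - 1)))) ^ ((1 : ℝ) / 4) ≤
        (1 - x ^ t) / (x * (1 - x ^ (t - 1))) := by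
  have ht1 : t - 1 + 1 = t := by omega
  have hSpos : ∀ x : ℝ, x ∈ Set.Ioo (0:ℝ) 1 →
      0 < x * ∑ i ∈ Finset.range (t - 1), x ^ i := by
    intro x hx
    apply mul_pos hx.1
    apply Finset.sum_pos (fun i _ => pow_pos hx.1 i)
    rw [Finset.nonempty_range_iff]
    omega
  constructor
  · intro x hx y hy hxy
    simp only [aux_f_eq t ht x hx, aux_f_eq t ht y hy]
    have hle : x * ∑ i ∈ Finset.range (t - 1), x ^ i
        ≤ y * ∑ i ∈ Finset.range (t - 1), y ^ i := by
      rw [Finset.mul_sum, Finset.mul_sum]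
      apply Finset.sum_le_sum
      intro i _
      calc x * x ^ i = x ^ (i + 1) := by ring
        _ ≤ y ^ (i + 1) := pow_le_pow_left₀ hx.1.le hxy (i + 1)
        _ = y * y ^ i := by ring
    have := one_div_le_one_div_of_le (hSpos x hx) hle
    linarith
  · intro x hx
    obtain ⟨hx0, hx1⟩ := hx
    have hx4 : x ^ 4 ∈ Set.Ioo (0:ℝ) 1 :=
      ⟨pow_pos hx0 4, pow_lt_one₀ hx0.le hx1 (by norm_num)⟩
    set p := x ^ (t - 1) with hp
    set q := x ^ t with hq
    have hp1 : p < 1 := pow_lt_one₀ hx0.le hx1 (by omega)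
    have hp0 : 0 < p := pow_pos hx0 _
    have hq0 : 0 < q := pow_pos hx0 _
    have hxt : x ^ t = p * x := by rw [hp, ← pow_succ, ht1]
    have hqp : q ≤ p := by rw [hq, hxt]; nlinarith
    have hq1 : q < 1 := lt_of_le_of_lt hqp hp1
    -- key polynomial inequality
    have core : (1 - q ^ 4) * (1 - p) ^ 4 ≤ (1 - q) ^ 4 * (1 - p ^ 4) := by
      have hmain : (1 + q) * (1 + q ^ 2) * (1 - p) ^ 3
          ≤ (1 + p) * (1 + p ^ 2) * (1 - q) ^ 3 := by
        have h1 : (1 - p) ^ 3 ≤ (1 - q) ^ 3 :=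
          pow_le_pow_left₀ (by linarith) (by linarith) 3
        have h2 : q ^ 2 ≤ p ^ 2 := pow_le_pow_left₀ hq0.le hqp 2
        have h3 : q ^ 3 ≤ p ^ 3 := pow_le_pow_left₀ hq0.le hqp 3
        have hA : (1 + q) * (1 + q ^ 2) ≤ (1 + p) * (1 + p ^ 2) := by nlinarith
        have := mul_le_mul hA h1 (pow_nonneg (by linarith) 3) (by nlinarith)
        linarith
      calc (1 - q ^ 4) * (1 - p) ^ 4
          = ((1 - p) * (1 - q)) * ((1 + q) * (1 + q ^ 2) * (1 - p) ^ 3) := by ring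
        _ ≤ ((1 - p) * (1 - q)) * ((1 + p) * (1 + p ^ 2) * (1 - q) ^ 3) := by
            apply mul_le_mul_of_nonneg_left hmain
            exact mul_nonneg (by linarith) (by linarith)
        _ = (1 - q) ^ 4 * (1 - p ^ 4) := by ring
    have e1 : (x ^ 4) ^ t = q ^ 4 := by rw [hq, ← pow_mul, ← pow_mul, Nat.mul_comm]
    have e2 : (x ^ 4) ^ (t - 1) = p ^ 4 := by rw [hp, ← pow_mul, ← pow_mul, Nat.mul_comm]
    have hden1 : 0 < x * (1 - x ^ (t - 1)) := mul_pos hx0 (by rw [← hp]; linarith)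
    have hden2 : 0 < x ^ 4 * (1 - (x ^ 4) ^ (t - 1)) := by
      rw [e2]; exact mul_pos hx4.1 (by nlinarith [pow_lt_one₀ hp0.le hp1 (by norm_num : 4 ≠ 0)])
    -- main inequality f(x^4) ≤ f(x)^4
    have hkey : (1 - (x ^ 4) ^ t) / (x ^ 4 * (1 - (x ^ 4) ^ (t - 1)))
        ≤ ((1 - x ^ t) / (x * (1 - x ^ (t - 1)))) ^ 4 := by
      rw [div_pow, div_le_div_iff₀ hden2 (pow_pos hden1 4)]
      rw [e1, e2, ← hp, ← hq]
      calc (1 - q ^ 4) * (x * (1 - p)) ^ 4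
          = x ^ 4 * ((1 - q ^ 4) * (1 - p) ^ 4) := by ring
        _ ≤ x ^ 4 * ((1 - q) ^ 4 * (1 - p ^ 4)) :=
            mul_le_mul_of_nonneg_left core (by positivity)
        _ = (1 - q) ^ 4 * (x ^ 4 * (1 - p ^ 4)) := by ring
    have hf4_nonneg : 0 ≤ (1 - (x ^ 4) ^ t) / (x ^ 4 * (1 - (x ^ 4) ^ (t - 1))) := by
      apply div_nonneg _ hden2.le
      rw [e1]; nlinarith [pow_lt_one₀ hq0.le hq1 (by norm_num : 4 ≠ 0)]
    have hf_nonneg : 0 ≤ (1 - x ^ t) / (x * (1 - x ^ (t - 1))) := by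
      apply div_nonneg _ hden1.le
      rw [← hq]; linarith
    calc ((1 - (x ^ 4) ^ t) / (x ^ 4 * (1 - (x ^ 4) ^ (t - 1)))) ^ ((1:ℝ)/4)
        ≤ (((1 - x ^ t) / (x * (1 - x ^ (t - 1)))) ^ 4) ^ ((1:ℝ)/4) :=
          Real.rpow_le_rpow hf4_nonneg hkey (by norm_num)
      _ = (1 - x ^ t) / (x * (1 - x ^ (t - 1))) := by
          rw [← Real.rpow_natCast ((1 - x ^ t) / (x * (1 - x ^ (t - 1)))) 4,
            ← Real.rpow_mul hf_nonneg]
          norm_num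
end
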